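/- arXiv:1110.4260 — 7 statements merged into one kernel-verified Lean document; each statement's English description precedes it below -/
import Mathlib

section
/- Let q ≥ 1 and let β₁,…,β_q be linearly independent vectors in a Euclidean space V. Let P be an admissible subsystem of roots contained in the set of all sums ∑_{j=1}^q ε_j β_j with ε_j ∈ {±1}. Then any two vectors in P of different norms are orthogonal. -/
/-!
Let `x, y ∈ P` with `‖y‖ < ‖x‖` and `⟪x, y⟫ ≠ 0`. Integrality of the Cartan numbers forces
`‖x‖² = 2‖y‖²` or `3‖y‖²` (the ratio `4` would make `x = ±2y`), and after replacing `x` by `±x`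
we have `2⟪x, y⟫ = ‖x‖²`: `x` and `y` span a `B₂` or a `G₂`. The roots `γ = s_x y = y - x` and
`η = 2y - x` of `P̄` are not in `P`, since their coordinates in the basis `βⱼ` are not all `±1`
(those of `γ` are even, those of `η` are `±1` only if `x = y`). So both lie in the root system
`P̄ \ P`, hence so does `s_γ η`, which is `x` in type `B₂` and `y` in type `G₂`: a contradiction.
-/

open RealInnerProductSpace

variable {V : Type*} [NormedAddCommGroup V] [InnerProductSpace ℝ V]

/-- A root system in a Euclidean space, without the spanning condition. -/
def IsRootSet (R : Set V) : Prop :=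
  R.Finite ∧ (0 : V) ∉ R ∧
  (∀ α ∈ R, ∀ t : ℝ, t • α ∈ R → t = 1 ∨ t = -1) ∧
  (∀ α ∈ R, ∀ β ∈ R, ∃ n : ℤ, 2 * ⟪α, β⟫ / ⟪α, α⟫ = (n : ℝ)) ∧
  (∀ α ∈ R, ∀ v ∈ R, v - (2 * ⟪α, v⟫ / ⟪α, α⟫) • α ∈ R)

/-- A root system: a finite spanning set, not containing `0`, with `±α` the only
multiples of each root, satisfying integrality and closed under reflections. -/
def IsRootSystem (R : Set V) : Prop :=
  IsRootSet R ∧ Submodule.span ℝ R = ⊤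

/-- A subsystem of roots: a set spanning `V` contained in some root system of `V`. -/
def IsSubsystem (P : Set V) : Prop :=
  Submodule.span ℝ P = ⊤ ∧ ∃ R : Set V, IsRootSystem R ∧ P ⊆ R

/-- The reflection closure of `P`: the minimal set containing `P` and closed under
the reflections `s_α` for `α` in it, i.e. the minimal root system `P̄` containing `P`. -/
inductive ReflClosure (P : Set V) : V → Prop
  | base : ∀ v ∈ P, ReflClosure P v
  | refl : ∀ α v, ReflClosure P α → ReflClosure P v →
      ReflClosure P (v - (2 * ⟪α, v⟫ / ⟪α, α⟫) • α)

/-- `P` is admissible if it is a subsystem of roots and `P̄ \ P` is a root system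
(in the subspace it spans). -/
def IsAdmissible (P : Set V) : Prop :=
  IsSubsystem P ∧ IsRootSet ({v | ReflClosure P v} \ P)

section SignSums

variable {M : Type*} [AddCommGroup M] [Module ℝ M] {ι : Type*} [Fintype ι] {β : ι → M}

def signSums (β : ι → M) : Set M :=
  {v | ∃ ε : ι → ℝ, (∀ j, ε j = 1 ∨ ε j = -1) ∧ v = ∑ j, ε j • β j}

lemma neg_mem_signSums {v : M} (hv : v ∈ signSums β) : -v ∈ signSums β := by
  obtain ⟨ε, hε, rfl⟩ := hv
  refine ⟨-ε, fun j => ?_, by simp only [Pi.neg_apply, neg_smul, Finset.sum_neg_distrib]⟩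
  rcases hε j with h | h <;> simp [h]

lemma add_notMem_signSums [Nonempty ι] (hβ : LinearIndependent ℝ β) {u v : M}
    (hu : u ∈ signSums β) (hv : v ∈ signSums β) : u + v ∉ signSums β := by
  obtain ⟨ε, hε, rfl⟩ := hu
  obtain ⟨δ, hδ, rfl⟩ := hv
  rintro ⟨η, hη, h⟩
  obtain ⟨j⟩ := ‹Nonempty ι›
  have hj := Fintype.linearIndependent_iffₛ.1 hβ (ε + δ) η
    (by simpa only [Pi.add_apply, add_smul, Finset.sum_add_distrib] using h) j
  rcases hε j with h1 | h1 <;> rcases hδ j with h2 | h2 <;> rcases hη j with h3 | h3 <;>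
    simp only [Pi.add_apply] at hj <;> linarith

lemma eq_of_two_smul_sub_mem_signSums (hβ : LinearIndependent ℝ β) {u v : M}
    (hu : u ∈ signSums β) (hv : v ∈ signSums β) (h : (2 : ℝ) • u - v ∈ signSums β) : v = u := by
  obtain ⟨ε, hε, rfl⟩ := hu
  obtain ⟨δ, hδ, rfl⟩ := hv
  obtain ⟨η, hη, h⟩ := h
  have hcoeff := Fintype.linearIndependent_iffₛ.1 hβ (fun j => 2 * ε j - δ j) η
    (by simpa only [sub_smul, mul_smul, Finset.sum_sub_distrib, Finset.smul_sum] using h)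
  refine Finset.sum_congr rfl fun j _ => congrArg (· • β j) ?_
  have hj := hcoeff j
  rcases hε j with h1 | h1 <;> rcases hδ j with h2 | h2 <;> rcases hη j with h3 | h3 <;> linarith

end SignSums

noncomputable def rootReflection (α v : V) : V := v - (2 * ⟪α, v⟫ / ⟪α, α⟫) • α

lemma rootReflection_eq_sub_smul {α v : V} {t : ℝ} (hα : α ≠ 0)
    (h : 2 * ⟪α, v⟫ = t * ⟪α, α⟫) : rootReflection α v = v - t • α := by
  rw [rootReflection, h, mul_div_assoc, div_self (inner_self_ne_zero.2 hα), mul_one]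

lemma rootReflection_self (α : V) : rootReflection α α = -α := by
  rcases eq_or_ne α 0 with rfl | hα
  · simp [rootReflection]
  · rw [rootReflection_eq_sub_smul hα (t := 2) rfl]
    module

def IsReflClosed (C : Set V) : Prop := ∀ α ∈ C, ∀ v ∈ C, rootReflection α v ∈ C

lemma IsRootSet.isReflClosed {R : Set V} (hR : IsRootSet R) : IsReflClosed R := hR.2.2.2.2

lemma isReflClosed_reflClosure (P : Set V) : IsReflClosed {v | ReflClosure P v} :=
  fun α hα v hv => ReflClosure.refl α v hα hv

lemma IsReflClosed.neg_mem {C : Set V} (hC : IsReflClosed C) {v : V} (hv : v ∈ C) : -v ∈ C :=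
  rootReflection_self v ▸ hC v hv v hv

/-- `u` long and `y` short span a root system of type `B₂` or `G₂`, with the angle between
them acute, so that `s_u y = y - u`. -/
structure IsLongShortPair (u y : V) : Prop where
  right_ne_zero : y ≠ 0
  two_inner : 2 * ⟪u, y⟫ = ⟪u, u⟫
  ratio : ⟪u, u⟫ = 2 * ⟪y, y⟫ ∨ ⟪u, u⟫ = 3 * ⟪y, y⟫

namespace IsLongShortPair

variable {u y : V} (h : IsLongShortPair u y)
include h

lemma inner_self_right_pos : 0 < ⟪y, y⟫ := real_inner_self_pos.2 h.right_ne_zero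

lemma left_ne_zero : u ≠ 0 := by
  rw [← real_inner_self_pos]
  rcases h.ratio with hk | hk <;> linarith [h.inner_self_right_pos]

lemma ne : u ≠ y := by
  rintro rfl
  rcases h.ratio with hk | hk <;> linarith [h.inner_self_right_pos]

lemma inner_sub_self : ⟪y - u, y - u⟫ = ⟪y, y⟫ := by
  simp only [inner_sub_left, inner_sub_right, real_inner_comm u y]
  linarith [h.two_inner]

end IsLongShortPair

namespace IsReflClosed

variable {C : Set V} (hC : IsReflClosed C) {u y : V} (h : IsLongShortPair u y)
include hC h

lemma sub_mem (hu : u ∈ C) (hy : y ∈ C) : y - u ∈ C := by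
  have hs := hC u hu y hy
  rwa [rootReflection_eq_sub_smul h.left_ne_zero (t := 1) (by linarith [h.two_inner]),
    one_smul] at hs

lemma two_smul_sub_mem (hu : u ∈ C) (hy : y ∈ C) : (2 : ℝ) • y - u ∈ C := by
  have huy := h.two_inner
  rcases h.ratio with hk | hk
  · have hs := hC.neg_mem (hC y hy u hu)
    rw [rootReflection_eq_sub_smul h.right_ne_zero (t := 2)
      (by rw [real_inner_comm]; linarith)] at hs
    convert hs using 1
    module
  · have hs := hC y hy _ (hC.sub_mem h hu hy)
    rw [rootReflection_eq_sub_smul h.right_ne_zero (t := -1)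
      (by simp only [inner_sub_right, real_inner_comm u y]; linarith)] at hs
    convert hs using 1
    module

lemma mem_or_mem (hγ : y - u ∈ C) (hη : (2 : ℝ) • y - u ∈ C) : u ∈ C ∨ y ∈ C := by
  have hγ0 : y - u ≠ 0 := by
    rw [← real_inner_self_pos, h.inner_sub_self]
    exact h.inner_self_right_pos
  have hγη : 2 * ⟪y - u, (2 : ℝ) • y - u⟫ = 4 * ⟪y, y⟫ - ⟪u, u⟫ := by
    simp only [inner_sub_left, inner_sub_right, real_inner_smul_right, real_inner_comm u y]
    linarith [h.two_inner]
  have hs := hC _ hγ _ hη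
  rcases h.ratio with hk | hk
  · rw [rootReflection_eq_sub_smul hγ0 (t := 2)
      (by rw [hγη, h.inner_sub_self]; linarith)] at hs
    exact Or.inl (by convert hs using 1; module)
  · rw [rootReflection_eq_sub_smul hγ0 (t := 1)
      (by rw [hγη, h.inner_sub_self]; linarith)] at hs
    exact Or.inr (by convert hs using 1; module)

end IsReflClosed

lemma eq_sign_and_mul_mem_of_sq_lt_sq {N M : ℤ} (h0 : 0 < N * M) (h4 : N * M ≤ 4)
    (hlt : N ^ 2 < M ^ 2) : (N = 1 ∨ N = -1) ∧ (N * M = 2 ∨ N * M = 3 ∨ N * M = 4) := by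
  have hN : 1 ≤ N ^ 2 := by nlinarith [sq_nonneg (N * M - 1), sq_nonneg N]
  have hM16 : M ^ 2 ≤ 16 := by nlinarith
  have hM1 : -4 ≤ M := by nlinarith
  have hM2 : M ≤ 4 := by nlinarith
  have hN1 : -4 ≤ N := by nlinarith
  have hN2 : N ≤ 4 := by nlinarith
  interval_cases N <;> interval_cases M <;> omega

lemma eq_two_smul_of_inner_self_eq_four_mul {x y : V} {n : ℝ} (hn : n * n = 1)
    (hxy : 2 * ⟪x, y⟫ = n * ⟪x, x⟫) (h4 : ⟪x, x⟫ = 4 * ⟪y, y⟫) : x = (2 * n) • y := by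
  rw [← sub_eq_zero, ← inner_self_eq_zero (𝕜 := ℝ)]
  simp only [inner_sub_left, inner_sub_right, real_inner_smul_left, real_inner_smul_right,
    real_inner_comm x y]
  linear_combination -h4 - 2 * n * hxy + (4 * ⟪y, y⟫ - 2 * ⟪x, x⟫) * hn

lemma IsRootSet.exists_sign_two_inner_eq {R : Set V} (hR : IsRootSet R) {x y : V}
    (hx : x ∈ R) (hy : y ∈ R) (hlt : ‖y‖ < ‖x‖) (hxy : ⟪x, y⟫ ≠ 0) :
    ∃ n : ℝ, (n = 1 ∨ n = -1) ∧ 2 * ⟪x, y⟫ = n * ⟪x, x⟫ ∧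
      (⟪x, x⟫ = 2 * ⟪y, y⟫ ∨ ⟪x, x⟫ = 3 * ⟪y, y⟫ ∨ ⟪x, x⟫ = 4 * ⟪y, y⟫) := by
  obtain ⟨-, h0, -, hint, -⟩ := hR
  have hb : 0 < ⟪y, y⟫ := real_inner_self_pos.2 (ne_of_mem_of_not_mem hy h0)
  have hba : ⟪y, y⟫ < ⟪x, x⟫ := by simp only [real_inner_self_eq_norm_sq]; gcongr
  obtain ⟨N, hN⟩ := hint x hx y hy
  obtain ⟨M, hM⟩ := hint y hy x hx
  rw [div_eq_iff (hb.trans hba).ne'] at hN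
  rw [real_inner_comm, div_eq_iff hb.ne'] at hM
  have h4c : 4 * (⟪x, y⟫ * ⟪x, y⟫) = N * M * (⟪x, x⟫ * ⟪y, y⟫) := by
    linear_combination (2 * ⟪x, y⟫) * hM + (M * ⟪y, y⟫) * hN
  have hsq : (N : ℝ) ^ 2 * ⟪x, x⟫ ^ 2 = M ^ 2 * ⟪y, y⟫ ^ 2 := by
    linear_combination (N * ⟪x, x⟫ + M * ⟪y, y⟫) * (hM - hN)
  have hM0 : (M : ℝ) ≠ 0 := by
    rintro h
    rw [h, zero_mul] at hM
    exact hxy (by linarith)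
  have hNM : (N : ℝ) ^ 2 < M ^ 2 := by
    refine lt_of_mul_lt_mul_right (hsq ▸ ?_) (sq_nonneg ⟪x, x⟫)
    exact mul_lt_mul_of_pos_left (pow_lt_pow_left₀ hba hb.le two_ne_zero) (by positivity)
  have hcs := real_inner_mul_inner_self_le x y
  have hc2 : 0 < ⟪x, y⟫ * ⟪x, y⟫ := mul_self_pos.2 hxy
  obtain ⟨hN1, hk⟩ := eq_sign_and_mul_mem_of_sq_lt_sq (N := N) (M := M)
    (by exact_mod_cast (show (0 : ℝ) < N * M by nlinarith))
    (by exact_mod_cast (show (N * M : ℝ) ≤ 4 by nlinarith)) (by exact_mod_cast hNM)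
  have hn1 : (N : ℝ) = 1 ∨ (N : ℝ) = -1 := by exact_mod_cast hN1
  have hNsq : (N : ℝ) * N = 1 := by rcases hn1 with h | h <;> rw [h] <;> norm_num
  have hab : ⟪x, x⟫ = (N * M : ℤ) * ⟪y, y⟫ := by
    push_cast
    linear_combination (-⟪x, x⟫) * hNsq - N * hN + N * hM
  refine ⟨N, hn1, hN, ?_⟩
  rcases hk with hk | hk | hk <;> rw [hk] at hab <;> push_cast at hab <;>
    simp only [hab, true_or, or_true]

lemma IsRootSet.exists_isLongShortPair {R : Set V} (hR : IsRootSet R) {x y : V}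
    (hx : x ∈ R) (hy : y ∈ R) (hlt : ‖y‖ < ‖x‖) (hxy : ⟪x, y⟫ ≠ 0) :
    ∃ u, (u = x ∨ u = -x) ∧ IsLongShortPair u y := by
  obtain ⟨n, hn, hxy2, hk⟩ := hR.exists_sign_two_inner_eq hx hy hlt hxy
  obtain ⟨-, h0, hmul, -⟩ := hR
  have hnn : n * n = 1 := by rcases hn with rfl | rfl <;> norm_num
  have huu : ⟪n • x, n • x⟫ = ⟪x, x⟫ := by
    rw [real_inner_smul_left, real_inner_smul_right, ← mul_assoc, hnn, one_mul]
  refine ⟨n • x, by rcases hn with rfl | rfl <;> simp, ne_of_mem_of_not_mem hy h0, ?_, ?_⟩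
  · rw [huu, real_inner_smul_left]
    linear_combination n * hxy2 + ⟪x, x⟫ * hnn
  · rw [huu]
    refine hk.imp_right (Or.resolve_right · fun h4 => ?_)
    rcases hmul y hy (2 * n) (eq_two_smul_of_inner_self_eq_four_mul hnn hxy2 h4 ▸ hx) with
      h | h <;> rcases hn with rfl | rfl <;> norm_num at h

/-- If `β₁,…,β_q` are linearly independent and `P` is an admissible subsystem of roots
contained in `{∑ εⱼβⱼ : εⱼ = ±1}`, then any two vectors of `P` of different norms are
orthogonal. -/
theorem stmt_3 (q : ℕ) (hq : 1 ≤ q) (β : Fin q → V) (hβ : LinearIndependent ℝ β)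
    (P : Set V) (hP : IsAdmissible P)
    (hPsub : P ⊆ {v | ∃ ε : Fin q → ℝ, (∀ j, ε j = 1 ∨ ε j = -1) ∧ v = ∑ j, ε j • β j}) :
    ∀ x ∈ P, ∀ y ∈ P, ‖x‖ ≠ ‖y‖ → ⟪x, y⟫ = 0 := by
  have : Nonempty (Fin q) := ⟨⟨0, hq⟩⟩
  change P ⊆ signSums β at hPsub
  intro x hx y hy hne
  wlog hlt : ‖y‖ < ‖x‖ generalizing x y
  · rw [real_inner_comm]
    exact this y hy x hx hne.symm ((not_lt.1 hlt).lt_of_ne hne)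
  by_contra hxy
  obtain ⟨⟨-, R, ⟨hR, -⟩, hPR⟩, hQ⟩ := hP
  obtain ⟨u, hux, h⟩ := hR.exists_isLongShortPair (hPR hx) (hPR hy) hlt hxy
  have hC := isReflClosed_reflClosure P
  have huC : ReflClosure P u := by
    rcases hux with hux | hux <;> rw [hux]
    exacts [.base x hx, hC.neg_mem (.base x hx)]
  have huS : u ∈ signSums β := by
    rcases hux with hux | hux <;> rw [hux]
    exacts [hPsub hx, neg_mem_signSums (hPsub hx)]
  have hγ : y - u ∈ {v | ReflClosure P v} \ P :=
    ⟨hC.sub_mem h huC (.base y hy), fun hγ => add_notMem_signSums hβ (hPsub hy)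
      (neg_mem_signSums huS) (by simpa only [sub_eq_add_neg] using hPsub hγ)⟩
  have hη : (2 : ℝ) • y - u ∈ {v | ReflClosure P v} \ P :=
    ⟨hC.two_smul_sub_mem h huC (.base y hy),
      fun hη => h.ne (eq_of_two_smul_sub_mem_signSums hβ (hPsub hy) huS (hPsub hη))⟩
  rcases hQ.isReflClosed.mem_or_mem h hγ hη with hu | hy'
  · rcases hux with hux | hux <;> rw [hux] at hu
    exacts [hu.2 hx, (neg_neg x ▸ hQ.isReflClosed.neg_mem hu).2 hx]
  · exact hy'.2 hy
end

section
/- Let 𝔥₁ ⊆ 𝔥₂ be compact Lie algebras of equal rank with a common Cartan subalgebra 𝔱. If α and β are roots of 𝔥₁ (with respect to 𝔱) and α + β is a root of 𝔥₂, then α + β is a root of 𝔥₁. -/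
/-!
Root spaces of the larger algebra are one-dimensional, so a root space of `𝔥₂` meeting `𝔥₁`
nontrivially lies entirely in `𝔥₁`. Hence `(𝔥₂)_α` and `(𝔥₂)_β` lie in `𝔥₁`, and so does
`(𝔥₂)_{α+β} = [(𝔥₂)_α, (𝔥₂)_β]`, since `𝔥₁` is closed under brackets.
-/

open LieAlgebra

/-- The root space `(𝔥₁)_α` of a subalgebra `𝔥₁ = N` of `𝔥₂ = L` (with respect to the
common Cartan subalgebra `H = 𝔱`), i.e. the intersection of the ambient root space
`(𝔥₂)_α` with `𝔥₁`. -/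
noncomputable def rootSpaceIn {K L : Type*} [Field K] [LieRing L] [LieAlgebra K L]
    (H : LieSubalgebra K L) [LieRing.IsNilpotent H]
    (N : LieSubalgebra K L) (α : H → K) : Submodule K L :=
  (rootSpace H α).toSubmodule ⊓ N.toSubmodule

/-- `α` is a root of the subalgebra `N ⊆ L` with respect to the Cartan subalgebra
`H ⊆ N`. -/
def IsRootOf {K L : Type*} [Field K] [LieRing L] [LieAlgebra K L]
    (H : LieSubalgebra K L) [LieRing.IsNilpotent H]
    (N : LieSubalgebra K L) (α : H → K) : Prop :=
  α ≠ 0 ∧ rootSpaceIn H N α ≠ ⊥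

theorem LieSubalgebra.span_lie_le_of_le {K L : Type*} [CommRing K] [LieRing L]
    [LieAlgebra K L] (N : LieSubalgebra K L) {S T : Submodule K L}
    (hS : S ≤ N.toSubmodule) (hT : T ≤ N.toSubmodule) :
    Submodule.span K {z : L | ∃ x ∈ S, ∃ y ∈ T, z = ⁅x, y⁆} ≤ N.toSubmodule :=
  Submodule.span_le.mpr fun _ ⟨_, hx, _, hy, hz⟩ => hz ▸ N.lie_mem (hS hx) (hT hy)

section RootSpaceIn

variable {K L : Type*} [Field K] [LieRing L] [LieAlgebra K L]
  {H : LieSubalgebra K L} [LieRing.IsNilpotent H] {N N' : LieSubalgebra K L} {α : H → K}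

theorem rootSpaceIn_le_rootSpace : rootSpaceIn H N α ≤ (rootSpace H α).toSubmodule :=
  inf_le_left

theorem rootSpaceIn_mono (h : N ≤ N') : rootSpaceIn H N α ≤ rootSpaceIn H N' α :=
  inf_le_inf_left _ h

theorem rootSpaceIn_eq_rootSpace_iff :
    rootSpaceIn H N α = (rootSpace H α).toSubmodule ↔
      (rootSpace H α).toSubmodule ≤ N.toSubmodule :=
  inf_eq_left

theorem IsRootOf.of_rootSpaceIn_le (hα : IsRootOf H N α)
    (h : rootSpaceIn H N α ≤ rootSpaceIn H N' α) : IsRootOf H N' α :=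
  ⟨hα.1, fun hbot => hα.2 (le_bot_iff.mp (hbot ▸ h))⟩

theorem IsRootOf.mono (hα : IsRootOf H N α) (h : N ≤ N') : IsRootOf H N' α :=
  hα.of_rootSpaceIn_le (rootSpaceIn_mono h)

theorem IsRootOf.of_top (hα : IsRootOf H ⊤ α)
    (h : (rootSpace H α).toSubmodule ≤ N.toSubmodule) : IsRootOf H N α :=
  hα.of_rootSpaceIn_le ((rootSpaceIn_eq_rootSpace_iff.mpr h).symm ▸ rootSpaceIn_le_rootSpace)

theorem IsRootOf.rootSpace_le (hα : IsRootOf H N α)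
    (h1 : Module.finrank K (rootSpace H α) = 1) :
    (rootSpace H α).toSubmodule ≤ N.toSubmodule :=
  rootSpaceIn_eq_rootSpace_iff.mp <|
    ((Submodule.isAtom_iff_finrank_eq_one.mpr h1).le_iff_eq hα.2).mp rootSpaceIn_le_rootSpace

end RootSpaceIn

theorem stmt_4_general {K L : Type*} [Field K] [LieRing L] [LieAlgebra K L]
    (H : LieSubalgebra K L) [H.IsCartanSubalgebra]
    (h₁ : LieSubalgebra K L)
    (hdim : ∀ γ : H → K, IsRootOf H ⊤ γ → Module.finrank K (rootSpace H γ) = 1)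
    (hbracket : ∀ α β : H → K, IsRootOf H ⊤ α → IsRootOf H ⊤ β →
      IsRootOf H ⊤ (α + β) →
      Submodule.span K {z : L | ∃ x ∈ rootSpace H α, ∃ y ∈ rootSpace H β, z = ⁅x, y⁆}
        = (rootSpace H (α + β)).toSubmodule)
    (α β : H → K) (hα : IsRootOf H h₁ α) (hβ : IsRootOf H h₁ β)
    (hsum : IsRootOf H ⊤ (α + β)) : IsRootOf H h₁ (α + β) := by
  have hα_top := hα.mono le_top
  have hβ_top := hβ.mono le_top
  refine hsum.of_top ?_
  rw [← hbracket α β hα_top hβ_top hsum]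
  exact h₁.span_lie_le_of_le (hα.rootSpace_le (hdim α hα_top)) (hβ.rootSpace_le (hdim β hβ_top))

/-- Let `𝔥₁ ⊆ 𝔥₂ = L` be (complexified) compact Lie algebras of equal rank, with a
common Cartan subalgebra `H`.  Compactness is encoded by its two standard consequences:
root spaces are one-dimensional, and `[(𝔥₂)_α, (𝔥₂)_β] = (𝔥₂)_{α+β}` whenever `α`, `β`
and `α+β` are roots.  If `α` and `β` are roots of `𝔥₁` and `α + β` is a root of `𝔥₂`,
then `α + β` is a root of `𝔥₁`. -/
theorem stmt_4 {K L : Type*} [Field K] [LieRing L] [LieAlgebra K L]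
    (H : LieSubalgebra K L) [H.IsCartanSubalgebra]
    (h₁ : LieSubalgebra K L) (hH : H ≤ h₁)
    (hdim : ∀ γ : H → K, IsRootOf H ⊤ γ → Module.finrank K (rootSpace H γ) = 1)
    (hbracket : ∀ α β : H → K, IsRootOf H ⊤ α → IsRootOf H ⊤ β →
      IsRootOf H ⊤ (α + β) →
      Submodule.span K {z : L | ∃ x ∈ rootSpace H α, ∃ y ∈ rootSpace H β, z = ⁅x, y⁆}
        = (rootSpace H (α + β)).toSubmodule)
    (α β : H → K) (hα : IsRootOf H h₁ α) (hβ : IsRootOf H h₁ β)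
    (hsum : IsRootOf H ⊤ (α + β)) : IsRootOf H h₁ (α + β) :=
  stmt_4_general H h₁ hdim hbracket α β hα hβ hsum
end

section
/- Let A = {α₁,…,α_p} and B = {β₁,…,β_q} be finite subsets of a Euclidean space V with all β_j ≠ 0 and A = −A. If the set P₁ = {α_i + ∑_{j=1}^q ε_j β_j : 1 ≤ i ≤ p, ε_j ∈ {±1}} is a subsystem of roots, then q ≤ 4. -/
open RealInnerProductSpace

variable {V : Type*} [NormedAddCommGroup V] [InnerProductSpace ℝ V]

/-- If `A = {α₁,…,α_p}` with `A = -A`, the `βⱼ` are nonzero, and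
`P₁ = {αᵢ + ∑ εⱼβⱼ}` is a subsystem of roots, then `q ≤ 4`. -/
theorem stmt_7 (p q : ℕ) (hp : 0 < p) (α : Fin p → V) (β : Fin q → V)
    (hβ : ∀ j, β j ≠ 0) (hA : ∀ i, ∃ i', α i' = -α i)
    (hP : IsSubsystem {v : V | ∃ (i : Fin p) (ε : Fin q → ℝ),
      (∀ j, ε j = 1 ∨ ε j = -1) ∧ v = α i + ∑ j, ε j • β j}) :
    q ≤ 4 := by
  obtain ⟨-, R, ⟨⟨-, h0, -, hint, -⟩, -⟩, hsub⟩ := hP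
  set i0 : Fin p := ⟨0, hp⟩ with hi0
  set e : (Fin q → Bool) → Fin q → ℝ := fun σ j => if σ j then 1 else -1 with he
  set x : (Fin q → Bool) → V := fun σ => α i0 + ∑ j, e σ j • β j with hx
  have hxR : ∀ σ, x σ ∈ R := fun σ =>
    hsub ⟨i0, e σ, fun j => by by_cases h : σ j <;> simp [he, h], rfl⟩
  obtain ⟨σ, -, hmax⟩ := Finset.exists_max_image (Finset.univ : Finset (Fin q → Bool))
    (fun σ' => ⟪x σ', x σ'⟫) ⟨fun _ => true, Finset.mem_univ _⟩
  set N : ℝ := ⟪x σ, x σ⟫ with hNdef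
  have hpos : ∀ v : V, v ≠ 0 → 0 < (⟪v, v⟫ : ℝ) := fun v hv =>
    lt_of_le_of_ne real_inner_self_nonneg fun h => hv (inner_self_eq_zero.1 h.symm)
  have hN0 : 0 < N := hpos _ fun h => h0 (h ▸ hxR σ)
  have hkey : ∀ v ∈ R, ∃ n : ℤ, 2 * ⟪x σ, v⟫ = (n : ℝ) * N := by
    intro v hv
    obtain ⟨n, hn⟩ := hint (x σ) (hxR σ) v hv
    rw [← hNdef] at hn
    refine ⟨n, ?_⟩
    field_simp [hN0.ne'] at hn
    linarith
  have hflip : ∀ j, x (Function.update σ j (!σ j)) = x σ - (2 * e σ j) • β j := by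
    intro j
    have h1 : ∀ k : Fin q, e (Function.update σ j (!σ j)) k • β k
        = e σ k • β k - (if k = j then (2 * e σ j) • β j else 0) := by
      intro k
      rcases eq_or_ne k j with rfl | hkj
      · rcases Bool.eq_false_or_eq_true (σ k) with h | h <;>
          simp [he, h] <;> module
      · simp [he, Function.update_of_ne hkj, hkj]
    simp only [hx]
    rw [Finset.sum_congr rfl fun k _ => h1 k, Finset.sum_sub_distrib,
      Finset.sum_ite_eq' Finset.univ j, if_pos (Finset.mem_univ j)]
    abel
  have hneg : x (fun j => !σ j) = (2 : ℝ) • α i0 - x σ := by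
    have h1 : ∀ k : Fin q, e (fun j => !σ j) k • β k = -(e σ k • β k) := by
      intro k
      rcases Bool.eq_false_or_eq_true (σ k) with h | h <;> simp [he, h]
    simp only [hx]
    rw [Finset.sum_congr rfl fun k _ => h1 k, Finset.sum_neg_distrib]
    module
  have hks : ∀ j : Fin q, ∃ k : ℤ, 1 ≤ k ∧ (k : ℝ) * N = 4 * (e σ j * ⟪x σ, β j⟫) := by
    intro j
    obtain ⟨n, hn⟩ := hkey _ (hxR (Function.update σ j (!σ j)))
    rw [hflip j] at hn
    have hip : ⟪x σ, x σ - (2 * e σ j) • β j⟫ = N - 2 * (e σ j * ⟪x σ, β j⟫) := by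
      rw [inner_sub_right, real_inner_smul_right, ← hNdef]; ring
    rw [hip] at hn
    have hes : e σ j * e σ j = 1 := by
      rcases Bool.eq_false_or_eq_true (σ j) with h | h <;> simp [he, h]
    have hle := hmax (Function.update σ j (!σ j)) (Finset.mem_univ _)
    rw [hflip j] at hle
    have hx' : ⟪x σ - (2 * e σ j) • β j, x σ - (2 * e σ j) • β j⟫
        = N - 4 * (e σ j * ⟪x σ, β j⟫) + 4 * (e σ j * e σ j) * ⟪β j, β j⟫ := by
      rw [real_inner_sub_sub_self, real_inner_smul_right, real_inner_smul_left,
        real_inner_smul_right, ← hNdef]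
      ring
    rw [hx', hes] at hle
    have hb : (0 : ℝ) < ⟪β j, β j⟫ := hpos _ (hβ j)
    have hpos : (0 : ℝ) < 4 * (e σ j * ⟪x σ, β j⟫) := by linarith
    refine ⟨2 - n, ?_, by push_cast; linarith⟩
    have hnR : ((2 - n : ℤ) : ℝ) * N = 4 * (e σ j * ⟪x σ, β j⟫) := by push_cast; linarith
    have : (0 : ℝ) < ((2 - n : ℤ) : ℝ) := by nlinarith
    have : (0 : ℤ) < 2 - n := by exact_mod_cast this
    omega
  choose k hk1 hk2 using hks
  obtain ⟨m, hm⟩ := hkey _ (hxR (fun j => !σ j))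
  rw [hneg] at hm
  have hm' : (m : ℝ) * N = 4 * ⟪x σ, α i0⟫ - 2 * N := by
    rw [inner_sub_right, real_inner_smul_right, ← hNdef] at hm
    linarith
  have hsum : (∑ j, (k j : ℝ)) * N = 4 * N - 4 * ⟪x σ, α i0⟫ := by
    rw [Finset.sum_mul]
    rw [Finset.sum_congr rfl fun j _ => hk2 j, ← Finset.mul_sum]
    have h3 : ∑ j, e σ j * ⟪x σ, β j⟫ = ⟪x σ, ∑ j, e σ j • β j⟫ := by
      rw [inner_sum]
      exact Finset.sum_congr rfl fun j _ => (real_inner_smul_right _ _ _).symm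
    rw [h3]
    have h4 : (∑ j, e σ j • β j) = x σ - α i0 := by simp only [hx]; abel
    rw [h4, inner_sub_right, ← hNdef]
    ring
  have htotal : (∑ j, k j) + m = 2 := by
    have h6 : ((∑ j, (k j : ℝ)) + (m : ℝ)) * N = 2 * N := by
      rw [add_mul, hsum, hm']; ring
    have h7 : (∑ j, (k j : ℝ)) + (m : ℝ) = 2 := mul_right_cancel₀ hN0.ne' h6
    exact_mod_cast h7
  have hm2 : (-2 : ℤ) ≤ m := by
    have hcs := real_inner_mul_inner_self_le (x σ) (x (fun j => !σ j))
    have hle := hmax (fun j => !σ j) (Finset.mem_univ _)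
    have hm0 : 2 * ⟪x σ, x (fun j => !σ j)⟫ = (m : ℝ) * N := by
      rw [hneg, inner_sub_right, real_inner_smul_right, ← hNdef]
      linarith
    have hnn : (0 : ℝ) ≤ ⟪x (fun j => !σ j), x (fun j => !σ j)⟫ := real_inner_self_nonneg
    have h8 : ((m : ℝ) * N) ^ 2
        = 4 * (⟪x σ, x (fun j => !σ j)⟫ * ⟪x σ, x (fun j => !σ j)⟫) := by
      rw [← hm0]; ring
    have h9 : ((m : ℝ)) ^ 2 * N ^ 2 ≤ 4 * N ^ 2 := by nlinarith [hcs, hle, hN0.le]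
    have h10 : ((m : ℝ)) ^ 2 ≤ 4 :=
      le_of_mul_le_mul_right (by linarith) (pow_pos hN0 2)
    have : (-2 : ℝ) ≤ (m : ℝ) := by nlinarith [sq_nonneg ((m : ℝ) + 2)]
    exact_mod_cast this
  have hq : (q : ℤ) ≤ ∑ j, k j := by
    calc (q : ℤ) = ∑ _j : Fin q, (1 : ℤ) := by simp
    _ ≤ ∑ j, k j := Finset.sum_le_sum fun j _ => hk1 j
  have : (q : ℤ) ≤ 4 := by linarith
  exact_mod_cast this
end

section
/- Let A = {α₁,…,α_p} with A = −A and β₁,…,β_q nonzero vectors in a Euclidean space. If the set P₁ = {α_i + ∑_{j=1}^q ε_j β_j : 1 ≤ i ≤ p, ε_j ∈ {±1}} is a subsystem of roots and q = 4, then α_i = 0 for all i. -/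
open RealInnerProductSpace

variable {V : Type*} [NormedAddCommGroup V] [InnerProductSpace ℝ V]

/-!
Take the longest signed sum `m = ∑ εₖ vₖ`. Flipping the sign of a nonzero term `c = εₖ vₖ`
gives the root `m - 2c`, no longer than `m`; so `0 < ⟪m, c⟫`, and the integer
`2⟪m, m - 2c⟫ / ‖m‖² = 2 - 4⟪m, c⟫ / ‖m‖²` is less than `2`, whence `‖m‖² ≤ 4⟪m, c⟫`.
Summing over the nonzero terms, `‖m‖² = ∑ ⟪m, εₖ vₖ⟫` is at least `‖m‖² / 4` times their number,
so at most four of the `vₖ` are nonzero. With `v = (αᵢ, β₁, …, β₄)` this forces `αᵢ = 0`.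
-/

lemma norm_sq_le_inner_of_norm_sub_two_smul_le {m c : V} (h : ‖m - (2 : ℝ) • c‖ ≤ ‖m‖) :
    ‖c‖ ^ 2 ≤ ⟪m, c⟫ := by
  have hexp : ‖m - (2 : ℝ) • c‖ ^ 2 = ‖m‖ ^ 2 - 4 * ⟪m, c⟫ + 4 * ‖c‖ ^ 2 := by
    rw [norm_sub_sq_real, norm_smul, real_inner_smul_right]
    norm_num
    ring
  nlinarith [norm_nonneg (m - (2 : ℝ) • c)]

lemma IsRootSet.norm_sq_le_four_mul_inner {R : Set V} (hR : IsRootSet R) {m c : V}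
    (hm : m ∈ R) (hmc : m - (2 : ℝ) • c ∈ R) (hle : ‖m - (2 : ℝ) • c‖ ≤ ‖m‖) (hc : c ≠ 0) :
    ‖m‖ ^ 2 ≤ 4 * ⟪m, c⟫ := by
  have hm0 : 0 < ‖m‖ ^ 2 := by
    have : m ≠ 0 := fun h => hR.2.1 (h ▸ hm)
    positivity
  have hmc_pos : 0 < ⟪m, c⟫ :=
    (pow_pos (norm_pos_iff.mpr hc) 2).trans_le (norm_sq_le_inner_of_norm_sub_two_smul_le hle)
  obtain ⟨n, hn⟩ := hR.2.2.2.1 m hm _ hmc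
  rw [inner_sub_right, real_inner_smul_right, real_inner_self_eq_norm_sq] at hn
  have hn_eq : (n : ℝ) * ‖m‖ ^ 2 = 2 * ‖m‖ ^ 2 - 4 * ⟪m, c⟫ := by
    rw [← hn, div_mul_cancel₀ _ hm0.ne']; ring
  have hn_lt : (n : ℝ) < 2 := by nlinarith
  have hn_le : (n : ℝ) ≤ 1 := by exact_mod_cast Int.lt_add_one_iff.mp (by exact_mod_cast hn_lt)
  nlinarith

section SignedSum

variable {κ : Type*} [Fintype κ]

def signedSum (v : κ → V) (ε : κ → ℤˣ) : V :=
  ∑ k, ε k • v k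

lemma signedSum_update_neg [DecidableEq κ] (v : κ → V) (ε : κ → ℤˣ) (k : κ) :
    signedSum v (Function.update ε k (-ε k)) = signedSum v ε - (2 : ℝ) • (ε k • v k) := by
  have hk := Finset.mem_univ k
  simp only [signedSum]
  rw [← Finset.add_sum_erase _ _ hk, ← Finset.add_sum_erase _ _ hk, Function.update_self,
    Units.neg_smul, Finset.sum_congr rfl fun x hx => by
      rw [Function.update_of_ne (Finset.ne_of_mem_erase hx)]]
  generalize ε k • v k = x
  module

theorem IsRootSet.card_le_four_of_signedSum_mem {R : Set V} (hR : IsRootSet R) {v : κ → V}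
    (hv : ∀ ε, signedSum v ε ∈ R) {s : Finset κ} (hs : ∀ k ∈ s, v k ≠ 0) : s.card ≤ 4 := by
  classical
  obtain ⟨ε, hε⟩ := Finite.exists_max fun ε => ‖signedSum v ε‖
  set m := signedSum v ε
  have hm0 : 0 < ‖m‖ ^ 2 := by
    have : m ≠ 0 := fun h => hR.2.1 (h ▸ hv ε)
    positivity
  have hflip (k : κ) : ‖m - (2 : ℝ) • (ε k • v k)‖ ≤ ‖m‖ ∧ m - (2 : ℝ) • (ε k • v k) ∈ R := by
    rw [← signedSum_update_neg]; exact ⟨hε _, hv _⟩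
  have hterm (k : κ) (hk : v k ≠ 0) : ‖m‖ ^ 2 ≤ 4 * ⟪m, ε k • v k⟫ :=
    hR.norm_sq_le_four_mul_inner (hv ε) (hflip k).2 (hflip k).1
      ((smul_eq_zero_iff_eq (ε k)).not.mpr hk)
  have hsum : ∑ k ∈ s, ⟪m, ε k • v k⟫ ≤ ‖m‖ ^ 2 :=
    calc ∑ k ∈ s, ⟪m, ε k • v k⟫
        ≤ ∑ k, ⟪m, ε k • v k⟫ :=
          Finset.sum_le_sum_of_subset_of_nonneg (Finset.subset_univ s) fun k _ _ =>
            (sq_nonneg _).trans (norm_sq_le_inner_of_norm_sub_two_smul_le (hflip k).1)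
      _ = ‖m‖ ^ 2 := by rw [← inner_sum, ← real_inner_self_eq_norm_sq]; rfl
  have hcard := Finset.card_nsmul_le_sum s _ (‖m‖ ^ 2 / 4) fun k hk =>
    (div_le_iff₀' four_pos).mpr (hterm k (hs k hk))
  rw [nsmul_eq_mul] at hcard
  have : (s.card : ℝ) ≤ 4 := by nlinarith
  exact_mod_cast this

end SignedSum

lemma units_smul_eq_real_smul (u : ℤˣ) (x : V) : u • x = ((u : ℤ) : ℝ) • x := by
  rw [Units.smul_def, Int.cast_smul_eq_zsmul]

theorem stmt_8_general (p : ℕ) (α : Fin p → V) (β : Fin 4 → V)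
    (hβ : ∀ j, β j ≠ 0) (hA : ∀ i, ∃ i', α i' = -α i)
    (hP : IsSubsystem {v : V | ∃ (i : Fin p) (ε : Fin 4 → ℝ),
      (∀ j, ε j = 1 ∨ ε j = -1) ∧ v = α i + ∑ j, ε j • β j}) :
    ∀ i, α i = 0 := by
  obtain ⟨-, R, ⟨hR, -⟩, hPR⟩ := hP
  intro i
  let v : Option (Fin 4) → V := fun k => k.elim (α i) β
  have hv : ∀ ε, signedSum v ε ∈ R := fun ε => hPR <| by
    have hsign : ∀ u : ℤˣ, ((u : ℤ) : ℝ) = 1 ∨ ((u : ℤ) : ℝ) = -1 := fun u => by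
      rcases Int.units_eq_one_or u with rfl | rfl <;> simp
    obtain ⟨i', hi'⟩ : ∃ i', α i' = ε none • α i := by
      rcases Int.units_eq_one_or (ε none) with h | h
      · exact ⟨i, by simp [h]⟩
      · simpa [h] using hA i
    refine ⟨i', fun j => ((ε (some j) : ℤ) : ℝ), fun j => hsign _, ?_⟩
    simp [signedSum, Fintype.sum_option, v, hi', units_smul_eq_real_smul]
  by_contra hi
  have := hR.card_le_four_of_signedSum_mem hv (s := Finset.univ) fun k _ => by
    cases k <;> simp [v, hi, hβ]
  simp at this

/-- If `A = {α₁,…,α_p}` with `A = -A`, the `βⱼ` (`j = 1,…,4`) are nonzero, and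
`P₁ = {αᵢ + ∑ εⱼβⱼ}` is a subsystem of roots, then all `αᵢ = 0`. -/
theorem stmt_8 (p : ℕ) (hp : 0 < p) (α : Fin p → V) (β : Fin 4 → V)
    (hβ : ∀ j, β j ≠ 0) (hA : ∀ i, ∃ i', α i' = -α i)
    (hP : IsSubsystem {v : V | ∃ (i : Fin p) (ε : Fin 4 → ℝ),
      (∀ j, ε j = 1 ∨ ε j = -1) ∧ v = α i + ∑ j, ε j • β j}) :
    ∀ i, α i = 0 :=
  stmt_8_general p α β hβ hA hP
end

section
/- Let β₁,…,β₈ be vectors in a Euclidean space such that P = {∑_{j=1}^8 ε_j β_j : ε_j ∈ {±1}, ∏_j ε_j = 1} is an admissible subsystem of roots with exactly 2⁷ = 128 distinct elements, normalized so that the maximal norm of elements of P is 1. Then, up to permutation of indices and sign changes, the Gram matrix satisfies ⟨β_i, β_j⟩ = (1/8)δ_{ij}. -/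
open RealInnerProductSpace

variable {V : Type*} [NormedAddCommGroup V] [InnerProductSpace ℝ V]

/-!
Fix `ε` such that `v = ∑ εⱼ βⱼ` has norm `1`, and put `γⱼ = 2 εⱼ βⱼ`; the elements of `P` are then
the vectors `v - ∑_{j ∈ S} γⱼ` with `#S` even. Since `P` lies in a root system and `v` is longest,
`2 ⟨v, u⟩` is an integer `≤ 1` for each of the 28 vectors `u = v - γᵢ - γⱼ`, and averaging over
the pairs forces `⟨v, γⱼ⟩ = 1/4` for all `j`; the same holds at every element of `P` of norm `1`.
It follows that `‖v - γᵢ - γⱼ‖²` is `1`, `1/2` or `1/3`, and the last two values are excluded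
by admissibility: if the root `γᵢ + γⱼ` of `P̄` is not in `P`, reflecting `v` in it gives an
element of `P` that violates integrality; if it is in `P`, then `v = γₚ + 2 γ_q + γₜ` for
distinct indices, which pins down `‖γ_q‖² = 1/8` and `‖γₚ‖² = ‖γₜ‖² = 3/8`, and the same
argument applied to the pair `{p, t}` gives a second such relation contradicting the first.
So every `v - γᵢ - γⱼ` has norm `1`, and comparing `⟨·, γₘ⟩` at `v` and at these vectors gives
`⟨γᵢ, γⱼ⟩ = δᵢⱼ / 2`.
-/

open Finset

namespace IsRootSet

variable {R : Set V} {x y : V}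

lemma inner_le_half_inner_self (hR : IsRootSet R) (hx : x ∈ R) (hy : y ∈ R) (hxy : x ≠ y)
    (hle : ⟪y, y⟫ ≤ ⟪x, x⟫) : ⟪x, y⟫ ≤ ⟪x, x⟫ / 2 := by
  have hxx : 0 < ⟪x, x⟫ := real_inner_self_pos.2 fun h => hR.2.1 (h ▸ hx)
  obtain ⟨n, hn⟩ := hR.2.2.2.1 x hx y hy
  rw [div_eq_iff hxx.ne'] at hn
  by_contra! hgt
  have hn2 : (2 : ℝ) ≤ n := by
    have : (1 : ℤ) < n := by exact_mod_cast (show (1 : ℝ) < n by nlinarith)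
    exact_mod_cast this
  have hcs := real_inner_mul_inner_self_le x y
  have hge : ⟪x, x⟫ ≤ ⟪x, y⟫ := by nlinarith
  have hxy_eq : ⟪x, y⟫ = ⟪x, x⟫ := by nlinarith
  have hyy_eq : ⟪y, y⟫ = ⟪x, x⟫ := by nlinarith
  have : ⟪x - y, x - y⟫ = 0 := by
    rw [inner_sub_sub_self, real_inner_comm x y, hxy_eq, hyy_eq]; ring
  exact hxy (sub_eq_zero.1 (inner_self_eq_zero.1 this))

lemma inner_self_eq_of_inner_eq_half (hR : IsRootSet R) (hx : x ∈ R) (hy : y ∈ R)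
    (hxx : ⟪x, x⟫ = 1) (hyy : ⟪y, y⟫ ≤ 1) (hxy : ⟪x, y⟫ = 1 / 2) :
    ⟪y, y⟫ = 1 ∨ ⟪y, y⟫ = 1 / 2 ∨ ⟪y, y⟫ = 1 / 3 := by
  have hcs := real_inner_mul_inner_self_le x y
  rw [hxx, hxy] at hcs
  obtain ⟨n, hn⟩ := hR.2.2.2.1 y hy x hx
  rw [real_inner_comm, hxy, div_eq_iff (by linarith)] at hn
  have h1 : (1 : ℤ) ≤ n := by exact_mod_cast (show (1 : ℝ) ≤ n by nlinarith)
  have h4 : n ≤ 4 := by exact_mod_cast (show (n : ℝ) ≤ 4 by nlinarith)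
  interval_cases n
  · left; push_cast at hn; linarith
  · right; left; push_cast at hn; linarith
  · right; right; push_cast at hn; linarith
  · have hdouble : ⟪x - (2 : ℝ) • y, x - (2 : ℝ) • y⟫ = 0 := by
      simp only [inner_sub_sub_self, real_inner_smul_left, real_inner_smul_right,
        real_inner_comm x y, hxx, hxy]
      push_cast at hn; linarith
    have hx2 : x = (2 : ℝ) • y := sub_eq_zero.1 (inner_self_eq_zero.1 hdouble)
    rcases hR.2.2.1 y hy 2 (hx2 ▸ hx) with h | h <;> norm_num at h

lemma inner_eq_quarter (hR : IsRootSet R) (hx : x ∈ R) (hy : y ∈ R) (hxy : x ≠ y)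
    (hx' : ⟪x, x⟫ = 1 / 2 ∨ ⟪x, x⟫ = 1 / 3) (hy' : ⟪y, y⟫ = 1 / 2 ∨ ⟪y, y⟫ = 1 / 3)
    (h : 1 / 4 ≤ ⟪x, y⟫) : ⟪x, y⟫ = 1 / 4 ∧ ⟪x, x⟫ = 1 / 2 ∧ ⟪y, y⟫ = 1 / 2 := by
  have hthird : ∀ a ∈ R, ∀ b ∈ R, ⟪a, a⟫ = 1 / 3 → ⟪a, b⟫ = 1 / 4 → False := by
    intro a ha b hb haa hab
    obtain ⟨n, hn⟩ := hR.2.2.2.1 a ha b hb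
    rw [haa, hab] at hn
    have : (2 : ℤ) * n = 3 := by exact_mod_cast (show (2 : ℝ) * n = 3 by linarith)
    omega
  have hle := hR.inner_le_half_inner_self hx hy hxy
  have hle' := hR.inner_le_half_inner_self hy hx hxy.symm
  rw [real_inner_comm x y] at hle'
  rcases hx' with hx' | hx' <;> rcases hy' with hy' | hy' <;> rw [hx', hy'] at hle hle'
  · exact ⟨by linarith [hle (by norm_num)], hx', hy'⟩
  · exact (hthird y hy x hx hy' (by rw [real_inner_comm]; linarith [hle (by norm_num)])).elim
  · exact (hthird x hx y hy hx' (by linarith [hle' (by norm_num)])).elim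
  · linarith [hle (by norm_num)]

lemma inner_eq_quarter_of_add_eq_half (hR : IsRootSet R) {z : V} (hx : x ∈ R) (hy : y ∈ R)
    (hz : z ∈ R) (hxy : x ≠ y) (hxz : x ≠ z) (hx' : ⟪x, x⟫ = 1 / 2 ∨ ⟪x, x⟫ = 1 / 3)
    (hy' : ⟪y, y⟫ = 1 / 2 ∨ ⟪y, y⟫ = 1 / 3) (hz' : ⟪z, z⟫ = 1 / 2 ∨ ⟪z, z⟫ = 1 / 3)
    (hsum : ⟪x, y⟫ + ⟪x, z⟫ = 1 / 2) :
    ⟪x, y⟫ = 1 / 4 ∧ ⟪x, z⟫ = 1 / 4 ∧ ⟪x, x⟫ = 1 / 2 ∧ ⟪y, y⟫ = 1 / 2 ∧ ⟪z, z⟫ = 1 / 2 := by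
  rcases le_or_gt (1 / 4) ⟪x, y⟫ with hxy' | hxy'
  · obtain ⟨hxy', hxx, hyy⟩ := hR.inner_eq_quarter hx hy hxy hx' hy' hxy'
    obtain ⟨hxz', -, hzz⟩ := hR.inner_eq_quarter hx hz hxz hx' hz' (by linarith)
    exact ⟨hxy', hxz', hxx, hyy, hzz⟩
  · obtain ⟨hxz', -, -⟩ := hR.inner_eq_quarter hx hz hxz hx' hz' (by linarith)
    linarith

end IsRootSet

namespace SignedSums

lemma eq_of_sum_eq_of_le_add {ι : Type*} [Fintype ι] [DecidableEq ι] {d : ι → ℝ} {c : ℝ}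
    (hcard : 2 < Fintype.card ι) (hsum : ∑ i, d i = Fintype.card ι * c)
    (hpair : ∀ i j, i ≠ j → 2 * c ≤ d i + d j) (i : ι) : d i = c := by
  have hge : ∀ i, c ≤ d i := by
    intro i
    have hrest : ∑ m ∈ univ.erase i, (2 * c - d i) ≤ ∑ m ∈ univ.erase i, d m :=
      sum_le_sum fun m hm => by linarith [hpair m i (ne_of_mem_erase hm)]
    have hsplit := add_sum_erase univ d (mem_univ i)
    rw [sum_const, card_erase_of_mem (mem_univ i), card_univ, nsmul_eq_mul,
      Nat.cast_sub (by omega), Nat.cast_one] at hrest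
    have hN : (2 : ℝ) < Fintype.card ι := by exact_mod_cast hcard
    nlinarith
  have hzero : ∑ m, (d m - c) = 0 := by simp [sum_sub_distrib, hsum]
  linarith [(sum_eq_zero_iff_of_nonneg fun m _ => sub_nonneg.2 (hge m)).1 hzero i (mem_univ i)]

lemma exists_ne_ne {ι : Type*} [Fintype ι] [DecidableEq ι] (hcard : 2 < Fintype.card ι)
    (i j : ι) : ∃ k, k ≠ i ∧ k ≠ j := by
  obtain ⟨k, -, hk⟩ := exists_mem_notMem_of_card_lt_card (s := {i, j}) (t := univ)
    (card_le_two.trans_lt (by rwa [card_univ]))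
  simp only [mem_insert, mem_singleton, not_or] at hk
  exact ⟨k, hk⟩

lemma even_card_pair {ι : Type*} [DecidableEq ι] {i j : ι} (hij : i ≠ j) : Even #{i, j} := by
  rw [card_pair hij]; exact even_two

noncomputable def reflect (α v : V) : V := v - (2 * ⟪α, v⟫ / ⟪α, α⟫) • α

lemma reflect_reflect {α : V} (hα : α ≠ 0) (v : V) : reflect α (reflect α v) = v := by
  have hαα : ⟪α, α⟫ ≠ 0 := inner_self_ne_zero.2 hα
  have : ⟪α, reflect α v⟫ = -⟪α, v⟫ := by
    rw [reflect, inner_sub_right, real_inner_smul_right]; field_simp; ring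
  rw [reflect, this, reflect]; module

lemma _root_.ReflClosure.neg {P : Set V} {α : V} (h : ReflClosure P α) (hα : α ≠ 0) :
    ReflClosure P (-α) := by
  have hαα : ⟪α, α⟫ ≠ 0 := inner_self_ne_zero.2 hα
  convert ReflClosure.refl α α h h using 1
  rw [mul_div_assoc, div_self hαα]; module

lemma reflect_mem_of_notMem {P : Set V} (hQ : IsRootSet ({v | ReflClosure P v} \ P)) {α v : V}
    (hα : ReflClosure P α) (hαP : α ∉ P) (hα0 : α ≠ 0) (hv : v ∈ P) : reflect α v ∈ P := by
  by_contra hw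
  have := hQ.2.2.2.2 α ⟨hα, hαP⟩ (reflect α v) ⟨ReflClosure.refl α v hα (.base v hv), hw⟩
  change reflect α (reflect α v) ∈ _ at this
  rw [reflect_reflect hα0] at this
  exact this.2 hv

section SignVectors

variable {ι : Type*} {ε ζ : ι → ℝ}

def IsSign (ε : ι → ℝ) : Prop := ∀ j, ε j = 1 ∨ ε j = -1

lemma IsSign.mul_self (hε : IsSign ε) (m : ι) : ε m * ε m = 1 := by
  rcases hε m with h | h <;> simp [h]

lemma IsSign.ne_zero (hε : IsSign ε) (m : ι) : ε m ≠ 0 := by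
  rcases hε m with h | h <;> simp [h]

def IsEvenSign [Fintype ι] (ε : ι → ℝ) : Prop := IsSign ε ∧ ∏ j, ε j = 1

lemma isEvenSign_one [Fintype ι] : IsEvenSign (fun _ : ι => (1 : ℝ)) :=
  ⟨fun _ => Or.inl rfl, prod_const_one⟩

variable [DecidableEq ι] {S T : Finset ι}

def flipOn (S : Finset ι) (ε : ι → ℝ) (m : ι) : ℝ := if m ∈ S then -ε m else ε m

lemma IsSign.flipOn (hε : IsSign ε) (S : Finset ι) : IsSign (flipOn S ε) := by
  intro m
  unfold SignedSums.flipOn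
  split_ifs <;> rcases hε m with h | h <;> simp [h]

lemma IsSign.flipOn_inj (hε : IsSign ε) :
    SignedSums.flipOn S ε = SignedSums.flipOn T ε ↔ S = T := by
  refine ⟨fun h => ?_, fun h => h ▸ rfl⟩
  ext m
  have hm := congrFun h m
  unfold SignedSums.flipOn at hm
  constructor <;> intro hmem <;> by_contra hnot <;>
    simp only [hmem, hnot, if_true, if_false] at hm <;> exact hε.ne_zero m (by linarith)

variable [Fintype ι]

lemma prod_flipOn (S : Finset ι) (ε : ι → ℝ) :
    ∏ m, flipOn S ε m = (-1) ^ #S * ∏ m, ε m := by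
  have h : ∀ m, flipOn S ε m = (if m ∈ S then -1 else 1) * ε m := fun m => by
    unfold flipOn; split_ifs <;> ring
  simp_rw [h, prod_mul_distrib, prod_ite, prod_const_one, mul_one, prod_const, filter_mem_eq_inter,
    univ_inter]

lemma IsEvenSign.flipOn (hε : IsEvenSign ε) (hS : Even #S) : IsEvenSign (flipOn S ε) :=
  ⟨hε.1.flipOn S, by rw [prod_flipOn, hε.2, hS.neg_one_pow, one_mul]⟩

lemma IsEvenSign.exists_eq_flipOn (hε : IsEvenSign ε) (hζ : IsEvenSign ζ) :
    ∃ S : Finset ι, Even #S ∧ ζ = SignedSums.flipOn S ε := by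
  have hζε : ζ = SignedSums.flipOn {m | ζ m ≠ ε m} ε := by
    funext m
    unfold SignedSums.flipOn
    rcases hε.1 m with h | h <;> rcases hζ.1 m with h' | h' <;> simp [h, h']
  refine ⟨_, ?_, hζε⟩
  have h := prod_flipOn {m | ζ m ≠ ε m} ε
  rw [← hζε, hζ.2, hε.2, mul_one, eq_comm] at h
  exact (neg_one_pow_eq_one_iff_even (by norm_num)).1 h

def signSum (β : ι → V) (ε : ι → ℝ) : V := ∑ j, ε j • β j

def frame (β : ι → V) (ε : ι → ℝ) (m : ι) : V := (2 * ε m) • β m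

lemma signSum_flipOn (β : ι → V) (ε : ι → ℝ) (S : Finset ι) :
    signSum β (flipOn S ε) = signSum β ε - ∑ m ∈ S, frame β ε m := by
  have h : ∀ m, flipOn S ε m • β m = ε m • β m - if m ∈ S then frame β ε m else 0 := fun m => by
    unfold flipOn frame; split_ifs <;> module
  simp_rw [signSum, h, sum_sub_distrib, sum_ite_mem, univ_inter]

lemma signSum_flipOn_pair (β : ι → V) (ε : ι → ℝ) {i j : ι} (hij : i ≠ j) :
    signSum β (flipOn {i, j} ε) = signSum β ε - frame β ε i - frame β ε j := by
  rw [signSum_flipOn, sum_pair hij, sub_sub]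

end SignVectors

section

variable {ι : Type*} [Fintype ι]

def evenSignSums (β : ι → V) : Set V := {v | ∃ ε, IsEvenSign ε ∧ v = signSum β ε}

lemma inner_signSum_right (β : ι → V) (ε : ι → ℝ) (x : V) :
    ⟪x, signSum β ε⟫ = ∑ m, ε m * ⟪x, β m⟫ := by
  simp [signSum, inner_sum, real_inner_smul_right]

structure AdmissibleSignSystem (β : ι → V) (R : Set V) : Prop where
  isRootSet : IsRootSet R
  subset : evenSignSums β ⊆ R
  isRootSet_compl : IsRootSet ({v | ReflClosure (evenSignSums β) v} \ evenSignSums β)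
  injOn : Set.InjOn (signSum β) {ε | IsEvenSign ε}
  inner_self_le : ∀ x ∈ evenSignSums β, ⟪x, x⟫ ≤ 1

structure IsLongest (β : ι → V) (ε : ι → ℝ) : Prop where
  isEvenSign : IsEvenSign ε
  inner_self : ⟪signSum β ε, signSum β ε⟫ = 1

structure IsDegenerateTriple (β : ι → V) (ε : ι → ℝ) (p q t : ι) : Prop where
  ne_pq : p ≠ q
  ne_pt : p ≠ t
  ne_qt : q ≠ t
  signSum_eq : signSum β ε = frame β ε p + (2 : ℝ) • frame β ε q + frame β ε t

variable [DecidableEq ι] {β : ι → V} {ε : ι → ℝ} {S T : Finset ι}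

lemma signSum_flipOn_mem (hε : IsEvenSign ε) (hS : Even #S) :
    signSum β (flipOn S ε) ∈ evenSignSums β :=
  ⟨_, hε.flipOn hS, rfl⟩

lemma exists_eq_signSum_flipOn (hε : IsEvenSign ε) {x : V} (hx : x ∈ evenSignSums β) :
    ∃ S : Finset ι, Even #S ∧ x = signSum β (flipOn S ε) := by
  obtain ⟨ζ, hζ, rfl⟩ := hx
  obtain ⟨S, hS, rfl⟩ := hε.exists_eq_flipOn hζ
  exact ⟨S, hS, rfl⟩

lemma signSum_flipOn_pair_mem (hε : IsEvenSign ε) {i j : ι} (hij : i ≠ j) :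
    signSum β (flipOn {i, j} ε) ∈ evenSignSums β :=
  signSum_flipOn_mem hε (even_card_pair hij)

end

lemma injOn_signSum_of_ncard_eq {β : Fin 8 → V} (hcard : (evenSignSums β).ncard = 128) :
    Set.InjOn (signSum β) {ε | IsEvenSign ε} := by
  classical
  set E : Finset (Finset (Fin 8)) := {S | Even #S}
  have hP : evenSignSums β = ↑(E.image fun S => signSum β (flipOn S 1)) := by
    ext x
    simp only [coe_image, Set.mem_image, mem_coe, mem_filter, mem_univ, true_and, E]
    constructor
    · rintro ⟨ε, hε, rfl⟩
      obtain ⟨S, hS, rfl⟩ := isEvenSign_one.exists_eq_flipOn hε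
      exact ⟨S, hS, rfl⟩
    · rintro ⟨S, hS, rfl⟩
      exact signSum_flipOn_mem isEvenSign_one hS
  have hinj : Set.InjOn (fun S => signSum β (flipOn S 1)) E :=
    card_image_iff.1 (by rw [← Set.ncard_coe_finset, ← hP, hcard]; rfl)
  intro ε hε ζ hζ heq
  obtain ⟨S, hS, rfl⟩ := isEvenSign_one.exists_eq_flipOn hε
  obtain ⟨T, hT, rfl⟩ := isEvenSign_one.exists_eq_flipOn hζ
  rw [hinj (by simpa [E] using hS) (by simpa [E] using hT) heq]

namespace AdmissibleSignSystem

section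

variable {ι : Type*} [Fintype ι] [DecidableEq ι] {β : ι → V} {R : Set V} {ε : ι → ℝ}
  {S T : Finset ι}

lemma eq_of_signSum_flipOn_eq (h : AdmissibleSignSystem β R) (hε : IsEvenSign ε)
    (hS : Even #S) (hT : Even #T) (heq : signSum β (flipOn S ε) = signSum β (flipOn T ε)) :
    S = T :=
  hε.1.flipOn_inj.1 (h.injOn (hε.flipOn hS) (hε.flipOn hT) heq)

lemma signSum_flipOn_ne (h : AdmissibleSignSystem β R) (hε : IsEvenSign ε) (hS : Even #S)
    (hT : Even #T) {x : ι} (hxS : x ∈ S) (hxT : x ∉ T) :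
    signSum β (flipOn S ε) ≠ signSum β (flipOn T ε) :=
  fun heq => hxT (h.eq_of_signSum_flipOn_eq hε hS hT heq ▸ hxS)

end

variable {β : Fin 8 → V} {R : Set V} {ε : Fin 8 → ℝ} {S : Finset (Fin 8)} {i j k l p q t : Fin 8}

theorem inner_signSum_apply (h : AdmissibleSignSystem β R) (hε : IsLongest β ε) (m : Fin 8) :
    ⟪signSum β ε, β m⟫ = ε m / 8 := by
  have hv : signSum β ε ∈ evenSignSums β := ⟨ε, hε.isEvenSign, rfl⟩
  have hpair : ∀ i j : Fin 8, i ≠ j →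
      2 * (1 / 8) ≤ ε i * ⟪signSum β ε, β i⟫ + ε j * ⟪signSum β ε, β j⟫ := by
    intro i j hij
    have hu : signSum β (flipOn {i, j} ε) ∈ evenSignSums β :=
      signSum_flipOn_mem hε.isEvenSign (even_card_pair hij)
    have hne : signSum β ε ≠ signSum β (flipOn {i, j} ε) := fun heq => by
      have := congrFun (h.injOn hε.isEvenSign (hε.isEvenSign.flipOn (even_card_pair hij)) heq) i
      simp only [flipOn, mem_insert, mem_singleton, true_or, if_true] at this
      exact hε.isEvenSign.1.ne_zero i (by linarith)
    have hle := h.isRootSet.inner_le_half_inner_self (h.subset hv) (h.subset hu) hne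
      (hε.inner_self ▸ h.inner_self_le _ hu)
    rw [hε.inner_self, signSum_flipOn_pair β ε hij, inner_sub_right, inner_sub_right, frame, frame,
      real_inner_smul_right, real_inner_smul_right] at hle
    linarith [hε.inner_self]
  have hd := eq_of_sum_eq_of_le_add (by simp) (by rw [← inner_signSum_right, hε.inner_self]; simp)
    hpair m
  calc ⟪signSum β ε, β m⟫ = ε m * (ε m * ⟪signSum β ε, β m⟫) := by
        rw [← mul_assoc, hε.isEvenSign.1.mul_self, one_mul]
    _ = ε m / 8 := by rw [hd]; ring

lemma inner_frame (h : AdmissibleSignSystem β R) (hε : IsLongest β ε) (m : Fin 8) :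
    ⟪signSum β ε, frame β ε m⟫ = 1 / 4 := by
  rw [frame, real_inner_smul_right, h.inner_signSum_apply hε]
  linear_combination (1 / 4) * hε.isEvenSign.1.mul_self m

lemma inner_signSum_flipOn_frame (h : AdmissibleSignSystem β R) (hε : IsSign ε)
    (hw : IsLongest β (flipOn S ε)) (m : Fin 8) :
    ⟪signSum β (flipOn S ε), frame β ε m⟫ = if m ∈ S then -1 / 4 else 1 / 4 := by
  rw [frame, real_inner_smul_right, h.inner_signSum_apply hw, flipOn]
  split_ifs
  · linear_combination (-1 / 4) * hε.mul_self m
  · linear_combination (1 / 4) * hε.mul_self m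

lemma inner_signSum_flipOn (h : AdmissibleSignSystem β R) (hε : IsLongest β ε)
    (S : Finset (Fin 8)) : ⟪signSum β ε, signSum β (flipOn S ε)⟫ = 1 - #S / 4 := by
  rw [signSum_flipOn, inner_sub_right, inner_sum, hε.inner_self]
  simp [h.inner_frame hε, div_eq_mul_inv]

lemma inner_signSum_flipOn_pair (h : AdmissibleSignSystem β R) (hε : IsLongest β ε)
    (hij : i ≠ j) : ⟪signSum β ε, signSum β (flipOn {i, j} ε)⟫ = 1 / 2 := by
  rw [h.inner_signSum_flipOn hε, card_pair hij]; norm_num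

lemma inner_signSum_flipOn_pair_pair (h : AdmissibleSignSystem β R) (hε : IsLongest β ε)
    {k l : Fin 8} (hij : i ≠ j) (hkl : k ≠ l) :
    ⟪signSum β (flipOn {i, j} ε), signSum β (flipOn {k, l} ε)⟫ =
      ⟪frame β ε i + frame β ε j, frame β ε k + frame β ε l⟫ := by
  have hvr : ∀ a b, ⟪signSum β ε, frame β ε a + frame β ε b⟫ = 1 / 2 := fun a b => by
    rw [inner_add_right, h.inner_frame hε, h.inner_frame hε]; norm_num
  rw [signSum_flipOn_pair β ε hij, signSum_flipOn_pair β ε hkl, sub_sub, sub_sub, inner_sub_left,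
    inner_sub_right, inner_sub_right, hvr, real_inner_comm (signSum β ε) (frame β ε i + _), hvr,
    hε.inner_self]
  ring

lemma inner_self_signSum_flipOn_pair_eq (h : AdmissibleSignSystem β R) (hε : IsLongest β ε)
    (hij : i ≠ j) :
    letI u := signSum β (flipOn {i, j} ε)
    ⟪u, u⟫ = 1 ∨ ⟪u, u⟫ = 1 / 2 ∨ ⟪u, u⟫ = 1 / 3 :=
  h.isRootSet.inner_self_eq_of_inner_eq_half (h.subset ⟨ε, hε.isEvenSign, rfl⟩)
    (h.subset (signSum_flipOn_pair_mem hε.isEvenSign hij)) hε.inner_self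
    (h.inner_self_le _ (signSum_flipOn_pair_mem hε.isEvenSign hij))
    (h.inner_signSum_flipOn_pair hε hij)

lemma inner_frame_add_frame_ne (h : AdmissibleSignSystem β R) (hε : IsLongest β ε)
    (hij : i ≠ j) (hkl : k ≠ l) (hki : k ≠ i) (hkj : k ≠ j) (hli : l ≠ i) (hlj : l ≠ j)
    (hρ : letI r := frame β ε i + frame β ε j; ⟪r, r⟫ = 1 / 2 ∨ ⟪r, r⟫ = 1 / 3) :
    ⟪frame β ε i + frame β ε j, frame β ε k + frame β ε l⟫ ≠
      ⟪frame β ε i + frame β ε j, frame β ε i + frame β ε j⟫ := by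
  intro hrr
  rw [← h.inner_signSum_flipOn_pair_pair hε hij hkl,
    ← h.inner_signSum_flipOn_pair_pair hε hij hij] at hrr
  rw [← h.inner_signSum_flipOn_pair_pair hε hij hij] at hρ
  rcases h.inner_self_signSum_flipOn_pair_eq hε hkl with h1 | hρ'
  · have hγ := h.inner_signSum_flipOn_frame hε.isEvenSign.1
      ⟨hε.isEvenSign.flipOn (even_card_pair hkl), h1⟩
    have h0 : ⟪signSum β (flipOn {k, l} ε), signSum β (flipOn {i, j} ε)⟫ = 0 := by
      rw [signSum_flipOn_pair β ε hij, inner_sub_right, inner_sub_right,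
        real_inner_comm (signSum β ε), h.inner_signSum_flipOn_pair hε hkl, hγ, hγ]
      simp only [mem_insert, mem_singleton, hki.symm, hli.symm, hkj.symm, hlj.symm, or_self,
        if_false]
      norm_num
    rw [real_inner_comm, h0] at hrr
    rcases hρ with hρ | hρ <;> linarith
  · have hne := (h.signSum_flipOn_ne hε.isEvenSign (even_card_pair hkl) (even_card_pair hij)
      (mem_insert_self k {l}) (by simp [hki, hkj])).symm
    obtain ⟨hquarter, hhalf, -⟩ := h.isRootSet.inner_eq_quarter
      (h.subset (signSum_flipOn_pair_mem hε.isEvenSign hij))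
      (h.subset (signSum_flipOn_pair_mem hε.isEvenSign hkl)) hne hρ hρ'
      (by rcases hρ with hρ | hρ <;> linarith)
    linarith

lemma exists_inner_frame_eq_of_sub_smul_mem (h : AdmissibleSignSystem β R)
    (hε : IsLongest β ε)
    (hρ : letI r := frame β ε i + frame β ε j; ⟪r, r⟫ = 1 / 2 ∨ ⟪r, r⟫ = 1 / 3)
    (hw : letI r := frame β ε i + frame β ε j; signSum β ε - ⟪r, r⟫⁻¹ • r ∈ evenSignSums β) :
    letI r := frame β ε i + frame β ε j
    ∃ S : Finset (Fin 8), i ∈ S ∧ j ∈ S ∧ 4 ≤ #S ∧ ∀ m ∈ S, ⟪r, frame β ε m⟫ = ⟪r, r⟫ / 2 := by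
  set v := signSum β ε
  set γ := frame β ε
  set r := γ i + γ j
  set ρ := ⟪r, r⟫
  set w := v - ρ⁻¹ • r
  have hρ0 : ρ ≠ 0 := by rcases hρ with hρ | hρ <;> rw [hρ] <;> norm_num
  have hvr : ⟪v, r⟫ = 1 / 2 := by
    rw [inner_add_right, h.inner_frame hε, h.inner_frame hε]; norm_num
  obtain ⟨S, hS, hwS⟩ := exists_eq_signSum_flipOn hε.isEvenSign hw
  have hww : ⟪w, w⟫ = 1 := by
    rw [inner_sub_sub_self, real_inner_smul_left, real_inner_smul_right, real_inner_smul_left,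
      real_inner_smul_right, real_inner_comm v r, hvr, hε.inner_self, show ⟪r, r⟫ = ρ from rfl]
    field_simp
    ring
  -- `w = s_r v` is again longest, so its inner products with the frame are `±1/4`
  have hγ := h.inner_signSum_flipOn_frame hε.isEvenSign.1 ⟨hε.isEvenSign.flipOn hS, hwS ▸ hww⟩
  rw [← hwS] at hγ
  have hwr : ⟪w, γ i⟫ + ⟪w, γ j⟫ = -1 / 2 := by
    rw [← inner_add_right, inner_sub_left, real_inner_smul_left, hvr, inv_mul_cancel₀ hρ0]
    norm_num
  obtain ⟨hiS, hjS⟩ : i ∈ S ∧ j ∈ S := by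
    rw [hγ i, hγ j] at hwr
    split_ifs at hwr with hi hj <;> first | exact ⟨hi, hj⟩ | norm_num at hwr
  have hcard : (#S : ℝ) = 2 * ρ⁻¹ := by
    have h1 := h.inner_signSum_flipOn hε S
    rw [← hwS, inner_sub_right, real_inner_smul_right, hvr, hε.inner_self] at h1
    linarith
  refine ⟨S, hiS, hjS, ?_, fun m hm => ?_⟩
  · have h4 : (4 : ℝ) ≤ #S := by
      rw [hcard]; rcases hρ with hρ | hρ <;> rw [hρ] <;> norm_num
    exact_mod_cast h4
  · have hm' := hγ m
    rw [if_pos hm, inner_sub_left, real_inner_smul_left, h.inner_frame hε] at hm'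
    field_simp at hm' ⊢
    linarith

lemma sub_smul_frame_add_frame_notMem (h : AdmissibleSignSystem β R) (hε : IsLongest β ε)
    (hij : i ≠ j)
    (hρ : letI r := frame β ε i + frame β ε j; ⟪r, r⟫ = 1 / 2 ∨ ⟪r, r⟫ = 1 / 3) :
    letI r := frame β ε i + frame β ε j
    signSum β ε - ⟪r, r⟫⁻¹ • r ∉ evenSignSums β := by
  intro hw
  obtain ⟨S, hiS, hjS, hS4, hrγ⟩ := h.exists_inner_frame_eq_of_sub_smul_mem hε hρ hw
  have hrest : 1 < #(S \ {i, j}) := by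
    rw [card_sdiff_of_subset (by simp [insert_subset_iff, hiS, hjS]), card_pair hij]
    omega
  obtain ⟨k, hk, l, hl, hkl⟩ := one_lt_card.1 hrest
  simp only [mem_sdiff, mem_insert, mem_singleton, not_or] at hk hl
  refine h.inner_frame_add_frame_ne hε hij hkl hk.2.1 hk.2.2 hl.2.1 hl.2.2 hρ ?_
  rw [inner_add_right, hrγ k hk.1, hrγ l hl.1]
  ring

lemma frame_add_frame_mem (h : AdmissibleSignSystem β R) (hε : IsLongest β ε) (hij : i ≠ j)
    (hu : ⟪signSum β (flipOn {i, j} ε), signSum β (flipOn {i, j} ε)⟫ ≠ 1) :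
    frame β ε i + frame β ε j ∈ evenSignSums β := by
  have hρ := (h.inner_self_signSum_flipOn_pair_eq hε hij).resolve_left hu
  rw [h.inner_signSum_flipOn_pair_pair hε hij hij] at hρ
  have hvP : signSum β ε ∈ evenSignSums β := ⟨ε, hε.isEvenSign, rfl⟩
  set r := frame β ε i + frame β ε j
  have hvr : ⟪signSum β ε, r⟫ = 1 / 2 := by
    rw [inner_add_right, h.inner_frame hε, h.inner_frame hε]; norm_num
  have hr0 : r ≠ 0 := fun h0 => by rw [h0, inner_zero_right] at hvr; norm_num at hvr
  by_contra hrP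
  -- `r = -s_v (v - r)` lies in `P̄`, so if `r ∉ P` the reflection `s_r` maps `v` into `P`
  have hrcl : ReflClosure (evenSignSums β) r := by
    have hcl := ReflClosure.refl _ _ (.base _ hvP)
      (.base _ (signSum_flipOn_pair_mem hε.isEvenSign hij))
    rw [h.inner_signSum_flipOn_pair hε hij, hε.inner_self, signSum_flipOn_pair β ε hij] at hcl
    have e : signSum β ε - frame β ε i - frame β ε j - (2 * (1 / 2) / 1 : ℝ) • signSum β ε =
        -r := by
      module
    rw [e] at hcl
    simpa using hcl.neg (neg_ne_zero.2 hr0)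
  refine h.sub_smul_frame_add_frame_notMem hε hij hρ ?_
  convert reflect_mem_of_notMem h.isRootSet_compl hrcl hrP hr0 hvP using 1
  rw [reflect, real_inner_comm (signSum β ε) r, hvr]
  congr 2
  rw [mul_one_div_cancel two_ne_zero, one_div]

lemma exists_isDegenerateTriple (h : AdmissibleSignSystem β R) (hε : IsLongest β ε)
    (hij : i ≠ j) (hr : frame β ε i + frame β ε j ∈ evenSignSums β) :
    ∃ p q t, (q = i ∨ q = j) ∧ IsDegenerateTriple β ε p q t := by
  have hvP : signSum β ε ∈ evenSignSums β := ⟨ε, hε.isEvenSign, rfl⟩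
  obtain ⟨S, hS, hrS⟩ := exists_eq_signSum_flipOn hε.isEvenSign hr
  have hcard : #S = 2 := by
    have h1 := h.inner_signSum_flipOn hε S
    rw [← hrS, inner_add_right, h.inner_frame hε, h.inner_frame hε] at h1
    exact_mod_cast (show (#S : ℝ) = 2 by linarith)
  obtain ⟨a, c, hac, rfl⟩ := card_eq_two.1 hcard
  rw [signSum_flipOn_pair β ε hac] at hrS
  set γ := frame β ε
  have hv : signSum β ε = γ i + γ j + γ a + γ c := by rw [hrS]; abel
  have key : ∀ a c, a ≠ c → (a = i ∨ a = j) → c ≠ i → c ≠ j →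
      signSum β ε = γ i + γ j + γ a + γ c →
        ∃ p q t, (q = i ∨ q = j) ∧ IsDegenerateTriple β ε p q t := by
    rintro a c hac (rfl | rfl) hci hcj hv
    · exact ⟨j, a, c, Or.inl rfl, ⟨hij.symm, hcj.symm, hac, by rw [hv]; module⟩⟩
    · exact ⟨i, a, c, Or.inr rfl, ⟨hij, hci.symm, hac, by rw [hv]; module⟩⟩
  by_cases ha : a = i ∨ a = j <;> by_cases hc : c = i ∨ c = j
  · have hv2 : signSum β ε = (2 : ℝ) • (γ i + γ j) := by
      rw [hv]
      rcases ha with rfl | rfl <;> rcases hc with rfl | rfl <;>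
        first | exact absurd rfl hac | module
    rcases h.isRootSet.2.2.1 _ (h.subset hr) 2 (hv2 ▸ h.subset hvP) with h2 | h2 <;> norm_num at h2
  · push Not at hc
    exact key a c hac ha hc.1 hc.2 hv
  · push Not at ha
    exact key c a hac.symm hc ha.1 ha.2 (by rw [hv]; abel)
  · push Not at ha hc
    have hfour : Even #({i, j, a, c} : Finset (Fin 8)) := by
      rw [card_insert_of_notMem (by simp [hij, ha.1.symm, hc.1.symm]),
        card_insert_of_notMem (by simp [ha.2.symm, hc.2.symm]), card_pair hac]
      decide
    have hzero : signSum β (flipOn {i, j, a, c} ε) = 0 := by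
      rw [signSum_flipOn, sum_insert (by simp [hij, ha.1.symm, hc.1.symm]),
        sum_insert (by simp [ha.2.symm, hc.2.symm]), sum_pair hac, hv]
      abel
    exact (h.isRootSet.2.1 (hzero ▸ h.subset (signSum_flipOn_mem hε.isEvenSign hfour))).elim

lemma inner_self_ne_one_of_isDegenerateTriple (h : AdmissibleSignSystem β R)
    (hε : IsLongest β ε) (hd : IsDegenerateTriple β ε p q t) :
    ⟪signSum β (flipOn {p, t} ε), signSum β (flipOn {p, t} ε)⟫ ≠ 1 ∧
      ⟪signSum β (flipOn {q, t} ε), signSum β (flipOn {q, t} ε)⟫ ≠ 1 ∧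
      ⟪signSum β (flipOn {p, q} ε), signSum β (flipOn {p, q} ε)⟫ ≠ 1 := by
  obtain ⟨hpq, hpt, hqt, hv⟩ := hd
  set γ := frame β ε
  have hγ : ∀ {x y : Fin 8}, x ≠ y →
      ⟪signSum β (flipOn {x, y} ε), signSum β (flipOn {x, y} ε)⟫ = 1 → ∀ m,
        ⟪signSum β (flipOn {x, y} ε), γ m⟫ = if m ∈ ({x, y} : Finset _) then -1 / 4 else 1 / 4 :=
    fun hxy h1 => h.inner_signSum_flipOn_frame hε.isEvenSign.1
      ⟨hε.isEvenSign.flipOn (even_card_pair hxy), h1⟩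
  refine ⟨fun h1 => ?_, fun h1 => ?_, fun h1 => ?_⟩
  · have hq := hγ hpt h1 q
    nth_rewrite 2 [signSum_flipOn_pair β ε hpt] at h1
    rw [hv, show γ p + (2 : ℝ) • γ q + γ t - γ p - γ t = (2 : ℝ) • γ q by abel,
      real_inner_smul_right, hq] at h1
    norm_num [hpq.symm, hqt] at h1
  · have hp := hγ hqt h1 p
    have hq := hγ hqt h1 q
    nth_rewrite 2 [signSum_flipOn_pair β ε hqt] at h1
    rw [hv, show γ p + (2 : ℝ) • γ q + γ t - γ q - γ t = γ p + γ q by module, inner_add_right, hp,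
      hq] at h1
    norm_num [hpq, hpt] at h1
  · have hq := hγ hpq h1 q
    have ht := hγ hpq h1 t
    nth_rewrite 2 [signSum_flipOn_pair β ε hpq] at h1
    rw [hv, show γ p + (2 : ℝ) • γ q + γ t - γ p - γ q = γ q + γ t by module, inner_add_right, hq,
      ht] at h1
    norm_num [hpt.symm, hqt.symm] at h1

theorem inner_frame_self_of_isDegenerateTriple (h : AdmissibleSignSystem β R)
    (hε : IsLongest β ε) (hd : IsDegenerateTriple β ε p q t) :
    ⟪frame β ε q, frame β ε q⟫ = 1 / 8 ∧ ⟪frame β ε p, frame β ε p⟫ = 3 / 8 ∧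
      ⟪frame β ε t, frame β ε t⟫ = 3 / 8 ∧
      ⟪signSum β (flipOn {p, t} ε), signSum β (flipOn {p, t} ε)⟫ = 1 / 2 := by
  obtain ⟨hna, hnb, hnc⟩ := h.inner_self_ne_one_of_isDegenerateTriple hε hd
  obtain ⟨hpq, hpt, hqt, hv⟩ := hd
  have ha : signSum β (flipOn {p, t} ε) = (2 : ℝ) • frame β ε q := by
    rw [signSum_flipOn_pair β ε hpt, hv]; module
  have hb : signSum β (flipOn {q, t} ε) = frame β ε p + frame β ε q := by
    rw [signSum_flipOn_pair β ε hqt, hv]; module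
  have hc : signSum β (flipOn {p, q} ε) = frame β ε q + frame β ε t := by
    rw [signSum_flipOn_pair β ε hpq, hv]; module
  have hρa := (h.inner_self_signSum_flipOn_pair_eq hε hpt).resolve_left hna
  have hρb := (h.inner_self_signSum_flipOn_pair_eq hε hqt).resolve_left hnb
  have hρc := (h.inner_self_signSum_flipOn_pair_eq hε hpq).resolve_left hnc
  have hmem : ∀ {x y : Fin 8}, x ≠ y → signSum β (flipOn {x, y} ε) ∈ R :=
    fun hxy => h.subset (signSum_flipOn_pair_mem hε.isEvenSign hxy)
  have hne_ab := h.signSum_flipOn_ne hε.isEvenSign (even_card_pair hpt) (even_card_pair hqt)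
    (mem_insert_self p {t}) (by simp [hpq, hpt])
  have hne_ac := h.signSum_flipOn_ne hε.isEvenSign (even_card_pair hpt) (even_card_pair hpq)
    (x := t) (by simp) (by simp [hpt.symm, hqt.symm])
  have hsum : ⟪signSum β (flipOn {p, t} ε), signSum β (flipOn {q, t} ε)⟫ +
      ⟪signSum β (flipOn {p, t} ε), signSum β (flipOn {p, q} ε)⟫ = 1 / 2 := by
    rw [← inner_add_right, hb, hc, show frame β ε p + frame β ε q + (frame β ε q + frame β ε t) =
      signSum β ε by rw [hv]; module, real_inner_comm, h.inner_signSum_flipOn_pair hε hpt]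
  obtain ⟨hab, hac, haa, hbb, hcc⟩ := h.isRootSet.inner_eq_quarter_of_add_eq_half (hmem hpt)
    (hmem hqt) (hmem hpq) hne_ab hne_ac hρa hρb hρc hsum
  refine ⟨?_, ?_, ?_, haa⟩
  all_goals
    rw [ha] at haa hab hac
    rw [hb] at hab hbb
    rw [hc] at hac hcc
    simp only [inner_add_left, inner_add_right, real_inner_smul_left, real_inner_smul_right,
      real_inner_comm (frame β ε p), real_inner_comm (frame β ε t)] at haa hab hac hbb hcc
    linarith

theorem inner_self_signSum_flipOn_pair_eq_one (h : AdmissibleSignSystem β R)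
    (hε : IsLongest β ε) (hij : i ≠ j) :
    ⟪signSum β (flipOn {i, j} ε), signSum β (flipOn {i, j} ε)⟫ = 1 := by
  by_contra hne
  obtain ⟨p, q, t, -, hd⟩ := h.exists_isDegenerateTriple hε hij (h.frame_add_frame_mem hε hij hne)
  obtain ⟨-, hpp, htt, hpt⟩ := h.inner_frame_self_of_isDegenerateTriple hε hd
  obtain ⟨p', q', t', hq', hd'⟩ := h.exists_isDegenerateTriple hε hd.ne_pt
    (h.frame_add_frame_mem hε hd.ne_pt (by rw [hpt]; norm_num))
  have hqq := (h.inner_frame_self_of_isDegenerateTriple hε hd').1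
  rcases hq' with rfl | rfl <;> linarith

theorem inner_smul_smul (h : AdmissibleSignSystem β R) (hε : IsLongest β ε) (i j : Fin 8) :
    ⟪ε i • β i, ε j • β j⟫ = if i = j then 1 / 8 else 0 := by
  set γ := frame β ε
  have key : ∀ a b m, a ≠ b → ⟪γ a, γ m⟫ + ⟪γ b, γ m⟫ = if m = a ∨ m = b then 1 / 2 else 0 := by
    intro a b m hab
    have hγ := h.inner_signSum_flipOn_frame hε.isEvenSign.1 ⟨hε.isEvenSign.flipOn
      (even_card_pair hab), h.inner_self_signSum_flipOn_pair_eq_one hε hab⟩ m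
    rw [signSum_flipOn_pair β ε hab, inner_sub_left, inner_sub_left, h.inner_frame hε] at hγ
    simp only [mem_insert, mem_singleton] at hγ
    split_ifs at hγ ⊢ <;> linarith
  have hγγ : ⟪γ i, γ j⟫ = if i = j then 1 / 2 else 0 := by
    obtain ⟨k, hki, hkj⟩ := exists_ne_ne (by simp) i j
    split_ifs with hij
    · subst hij
      obtain ⟨l, hli, hlk⟩ := exists_ne_ne (by simp) i k
      have e1 := key i k i hki.symm
      have e2 := key i l i hli.symm
      have e3 := key k l i hlk.symm
      simp only [true_or, if_true, hki.symm, hli.symm, or_self, if_false] at e1 e2 e3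
      linarith
    · have e1 := key i k j hki.symm
      have e2 := key j i j (Ne.symm hij)
      have e3 := key j k j hkj.symm
      simp only [true_or, if_true, Ne.symm hij, hkj.symm, or_self, if_false] at e1 e2 e3
      linarith
  have hscale : ⟪γ i, γ j⟫ = 4 * ⟪ε i • β i, ε j • β j⟫ := by
    simp only [γ, frame, real_inner_smul_left, real_inner_smul_right]; ring
  split_ifs at hγγ ⊢ <;> linarith

end AdmissibleSignSystem

end SignedSums

open SignedSums in
/-- If `P = {∑_{j=1}^8 εⱼβⱼ : ∏ εⱼ = 1}` is an admissible subsystem of roots with `2⁷`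
distinct elements, normalized so that the maximal norm of elements of `P` is `1`, then up
to permutation of the subscripts and sign changes `⟨βᵢ, βⱼ⟩ = (1/8)δᵢⱼ`. -/
theorem stmt_15 (β : Fin 8 → V) (P : Set V)
    (hPdef : P = {v : V | ∃ ε : Fin 8 → ℝ,
      (∀ j, ε j = 1 ∨ ε j = -1) ∧ (∏ j, ε j) = 1 ∧ v = ∑ j, ε j • β j})
    (hP : IsAdmissible P) (hcard : P.ncard = 128)
    (hmax : ∀ v ∈ P, ‖v‖ ≤ 1) (hone : ∃ v ∈ P, ‖v‖ = 1) :
    ∃ (σ : Equiv.Perm (Fin 8)) (s : Fin 8 → ℝ), (∀ j, s j = 1 ∨ s j = -1) ∧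
      ∀ i j, ⟪s i • β (σ i), s j • β (σ j)⟫ = if i = j then 1/8 else 0 := by
  obtain ⟨⟨-, R, hR, hPR⟩, hQ⟩ := hP
  obtain rfl : P = evenSignSums β := by
    simp only [hPdef, evenSignSums, IsEvenSign, IsSign, signSum, and_assoc]
  have h : AdmissibleSignSystem β R := ⟨hR.1, hPR, hQ, injOn_signSum_of_ncard_eq hcard,
    fun x hx => by rw [real_inner_self_eq_norm_sq]; nlinarith [hmax x hx, norm_nonneg x]⟩
  obtain ⟨_, ⟨ε, hε, rfl⟩, hv⟩ := hone
  have hlong : IsLongest β ε := ⟨hε, by rw [real_inner_self_eq_norm_sq, hv, one_pow]⟩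
  exact ⟨Equiv.refl _, ε, hε.1, h.inner_smul_smul hlong⟩
end

section
/- Suppose vectors α₁, α₂, β₁,…,β₇ in a Euclidean space are such that both {α₁, β₁,…,β₇} and {α₂, β₁,…,β₇} are orthogonal sets with all square norms equal to 1/8, and all sums α_i + ∑_{j=1}^7 ε_j β_j (ε ∈ {±1}⁷, i = 1,2) lie in a common root system whose roots have pairwise inner products in {0, ±1/2} when of norm 1. If a := ⟨α₁, α₂⟩ satisfies a + 7/8, a + 3/8, a − 1/8 ∈ {0, ±1/2}, then a = −3/8, and hence ‖α₁ + α₂‖² = −1/2 < 0, a contradiction; therefore such α₁ ≠ ±α₂ cannot exist. -/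
open RealInnerProductSpace

variable {V : Type*} [NormedAddCommGroup V] [InnerProductSpace ℝ V]

/-!
With all signs `+1`, the roots `v = α₁ + s` and `w = α₂ + s`, where `s = ∑ⱼ βⱼ`, are distinct
unit vectors. They are not opposite, since both pair to `7/8` with `s`. But
`⟪v, w⟫ = ⟪α₁, α₂⟫ + 7/8 ≥ 3/4`, because `⟪α₁, α₂⟫ ≥ -1/8` by `‖α₁ + α₂‖² ≥ 0`; so `⟪v, w⟫`
is not in `{0, ±1/2}`.
-/

theorem real_inner_sum_self_of_orthogonal {ι : Type*} (s : Finset ι) (f : ι → V)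
    (hf : ∀ i j, i ≠ j → ⟪f i, f j⟫ = 0) :
    ⟪∑ i ∈ s, f i, ∑ i ∈ s, f i⟫ = ∑ i ∈ s, ⟪f i, f i⟫ := by
  rw [sum_inner]
  refine Finset.sum_congr rfl fun i hi => ?_
  rw [inner_sum, Finset.sum_eq_single_of_mem i hi fun j _ hji => hf i j hji.symm]

theorem real_inner_sum_eq_zero {ι : Type*} (s : Finset ι) (f : ι → V) {x : V}
    (hx : ∀ i, ⟪x, f i⟫ = 0) : ⟪x, ∑ i ∈ s, f i⟫ = 0 := by
  simp [inner_sum, hx]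

theorem real_inner_add_add_of_inner_eq_zero {x y s : V} (hx : ⟪x, s⟫ = 0) (hy : ⟪y, s⟫ = 0) :
    ⟪x + s, y + s⟫ = ⟪x, y⟫ + ⟪s, s⟫ := by
  rw [inner_add_left, inner_add_right, inner_add_right, hx, real_inner_comm y s, hy]
  ring

theorem neg_le_real_inner_of_inner_self_eq {x y : V} {c : ℝ} (hx : ⟪x, x⟫ = c)
    (hy : ⟪y, y⟫ = c) : -c ≤ ⟪x, y⟫ := by
  have h := real_inner_self_nonneg (x := x + y)
  rw [real_inner_add_add_self, hx, hy] at h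
  linarith

theorem stmt_17_general (α₁ α₂ : V) (β : Fin 7 → V)
    (hβorth : ∀ i j, i ≠ j → ⟪β i, β j⟫ = 0) (hβnorm : ∀ i, ⟪β i, β i⟫ = 1/8)
    (hαβ₁ : ∀ j, ⟪α₁, β j⟫ = 0) (hαβ₂ : ∀ j, ⟪α₂, β j⟫ = 0)
    (hα₁ : ⟪α₁, α₁⟫ = 1/8) (hα₂ : ⟪α₂, α₂⟫ = 1/8)
    (R : Set V)
    (hmem : ∀ (i : Fin 2) (ε : Fin 7 → ℝ), (∀ j, ε j = 1 ∨ ε j = -1) →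
      (if i = 0 then α₁ else α₂) + ∑ j, ε j • β j ∈ R)
    (hprod : ∀ v ∈ R, ∀ w ∈ R, ‖v‖ = 1 → ‖w‖ = 1 → v ≠ w → v ≠ -w →
      ⟪v, w⟫ ∈ ({0, 1/2, -1/2} : Set ℝ))
    (hne : α₁ ≠ α₂) : False := by
  set s := ∑ j, β j
  have hv : α₁ + s ∈ R := by simpa using hmem 0 (fun _ => 1) fun _ => Or.inl rfl
  have hw : α₂ + s ∈ R := by simpa using hmem 1 (fun _ => 1) fun _ => Or.inl rfl
  have hs : ⟪s, s⟫ = 7/8 := by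
    rw [real_inner_sum_self_of_orthogonal _ _ hβorth]
    simp only [hβnorm, Finset.sum_const, Finset.card_univ, Fintype.card_fin]
    norm_num
  have h₁ : ⟪α₁, s⟫ = 0 := real_inner_sum_eq_zero _ _ hαβ₁
  have h₂ : ⟪α₂, s⟫ = 0 := real_inner_sum_eq_zero _ _ hαβ₂
  have hunit : ∀ α : V, ⟪α, α⟫ = 1/8 → ⟪α, s⟫ = 0 → ‖α + s‖ = 1 := fun α hα hαs => by
    rw [norm_eq_sqrt_real_inner, real_inner_add_add_of_inner_eq_zero hαs hαs, hα, hs]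
    norm_num
  have hnot_neg : α₁ + s ≠ -(α₂ + s) := fun h => by
    have h' := congrArg (⟪·, s⟫) h
    simp only [inner_neg_left, inner_add_left, h₁, h₂, hs] at h'
    norm_num at h'
  have hpair := hprod _ hv _ hw (hunit α₁ hα₁ h₁) (hunit α₂ hα₂ h₂)
    (by simpa using hne) hnot_neg
  rw [real_inner_add_add_of_inner_eq_zero h₁ h₂, hs] at hpair
  have hlow := neg_le_real_inner_of_inner_self_eq hα₁ hα₂
  simp only [Set.mem_insert_iff, Set.mem_singleton_iff] at hpair
  rcases hpair with h | h | h <;> linarith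

/-- The key contradiction excluding rank `14`: if `{α₁, β₁,…,β₇}` and `{α₂, β₁,…,β₇}`
are orthogonal sets of square norm `1/8`, all vectors `αᵢ + ∑ εⱼβⱼ` lie in a common root
system `R` whose distinct non-opposite norm-one roots have inner products in `{0, ±1/2}`,
and `α₁ ≠ ±α₂`, then (since necessarily `⟨α₁,α₂⟩ = -3/8`, giving `‖α₁+α₂‖² = -1/2 < 0`)
we get a contradiction: such vectors cannot exist. -/
theorem stmt_17 (α₁ α₂ : V) (β : Fin 7 → V)
    (hβorth : ∀ i j, i ≠ j → ⟪β i, β j⟫ = 0) (hβnorm : ∀ i, ⟪β i, β i⟫ = 1/8)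
    (hαβ₁ : ∀ j, ⟪α₁, β j⟫ = 0) (hαβ₂ : ∀ j, ⟪α₂, β j⟫ = 0)
    (hα₁ : ⟪α₁, α₁⟫ = 1/8) (hα₂ : ⟪α₂, α₂⟫ = 1/8)
    (R : Set V) (hR : IsRootSystem R)
    (hmem : ∀ (i : Fin 2) (ε : Fin 7 → ℝ), (∀ j, ε j = 1 ∨ ε j = -1) →
      (if i = 0 then α₁ else α₂) + ∑ j, ε j • β j ∈ R)
    (hprod : ∀ v ∈ R, ∀ w ∈ R, ‖v‖ = 1 → ‖w‖ = 1 → v ≠ w → v ≠ -w →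
      ⟪v, w⟫ ∈ ({0, 1/2, -1/2} : Set ℝ))
    (hne : α₁ ≠ α₂) (hne' : α₁ ≠ -α₂) : False :=
  stmt_17_general α₁ α₂ β hβorth hβnorm hαβ₁ hαβ₂ hα₁ hα₂ R hmem hprod hne
end

section
/- The rank r of a homogeneous even Clifford structure on a compact homogeneous manifold G/H with rk(G) = rk(H) satisfies, as a purely combinatorial consequence on weight systems: if W ⊂ 𝔱* is a nonempty admissible subsystem of roots of the form A + {∑_{j=1}^q ε_j β_j} (type I, A = −A), or {(∏ε_j)α_i + ∑ ε_j β_j} (type II, q odd), or A + {∑ ε_j β_j : ∏ ε_j = ±1} (types III–IV, q even), with all β_j ≠ 0, then q ≤ 4 in type I, q ≤ 7 in type II, and q ≤ 8 in types III–IV; consequently r = 2q+1 ≤ 9 for r odd, r = 2q ≤ 14 for r ≡ 2 mod 4, r = 2q ≤ 12 for r ≡ 4 mod 8, and r = 2q ≤ 16 for r ≡ 0 mod 8. -/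
open RealInnerProductSpace

variable {V : Type*} [NormedAddCommGroup V] [InnerProductSpace ℝ V]

/-!
Let `v` be a longest element of the weight set `P`, which lies in a root system `R`. For a
root `w ≠ v` with `‖w‖ ≤ ‖v‖` the pairing `⟨v - w, v^∨⟩` is a positive integer, and
`⟨v, v^∨⟩ = 2`. Changing signs in `v = α_i + ∑ ε_j β_j` produces such `w`.

In type I, flipping a single `ε_j` gives `⟨2 ε_j β_j, v^∨⟩ ≥ 1`, and `α_i ↦ -α_i` gives
`⟨2 α_i, v^∨⟩ ≥ 0`; these add up to `⟨2v, v^∨⟩ = 4`, so `q ≤ 4`.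

In types III–IV only pairs of signs may be flipped, giving `⟨ε_j β_j + ε_k β_k, 2v^∨⟩ ≥ 1`
unless the two summands cancel. Cancelling pairs pairwise meet, so they form a star, and
averaging over the other pairs gives `⟨∑ ε_j β_j, 2v^∨⟩ ≥ q/2` unless all summands but one
are the negative of the remaining one. Since `⟨∑ ε_j β_j, 2v^∨⟩ ≤ 4`, this leaves only that
degenerate case, where either `⟨α_i, 2v^∨⟩ ≥ 1` or `v` and `v + 4 ε_ℓ β_ℓ` are proportional
roots. Type II is the same argument with `(∏ ε_j) α_i` as one more summand, since flipping a
single sign also flips it.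
-/

open Finset in
lemma card_le_two_mul_sum_of_one_le_add {ι : Type*} (T : Finset ι) (y : ι → ℝ) (hT : 2 ≤ #T)
    (h : ∀ j ∈ T, ∀ k ∈ T, j ≠ k → 1 ≤ y j + y k) : (#T : ℝ) ≤ 2 * ∑ j ∈ T, y j := by
  classical
  have hrow : ∀ j ∈ T, 2 * y j + (#T - 1) ≤ ∑ k ∈ T, (y j + y k) := by
    intro j hj
    have hrest := card_nsmul_le_sum (T.erase j) (fun k => y j + y k) 1
      fun k hk => h j hj k (mem_of_mem_erase hk) (ne_of_mem_erase hk).symm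
    rw [card_erase_of_mem hj, nsmul_one, Nat.cast_pred (by omega)] at hrest
    rw [← add_sum_erase T _ hj]
    linarith
  have htotal : ∑ j ∈ T, ∑ k ∈ T, (y j + y k) = 2 * #T * ∑ j ∈ T, y j := by
    simp only [sum_add_distrib, sum_const, nsmul_eq_mul, ← mul_sum]
    ring
  have := sum_le_sum hrow
  rw [htotal, sum_add_distrib, sum_const, nsmul_eq_mul, ← mul_sum] at this
  have hT' : (2 : ℝ) ≤ #T := by exact_mod_cast hT
  nlinarith

section NullPairs

variable {E ι : Type*} [AddCommGroup E] [Module ℝ E] {C : ι → E} {g : E →ₗ[ℝ] ℝ}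

lemma add_self_ne_zero_of_ne_zero {x : E} (hx : x ≠ 0) : x + x ≠ 0 := by
  rw [← two_smul ℝ]
  exact smul_ne_zero two_ne_zero hx

variable (hC : ∀ j, C j ≠ 0) (hg : ∀ j k, j ≠ k → C j + C k ≠ 0 → 1 ≤ g (C j + C k))
include hC hg

/-- Both cross pairings `{ac, bd}` and `{ad, bc}` have total `g`-value `0`, and one of them
consists of non-cancelling pairs. -/
lemma null_pairs_meet {a b c d : ι} (hab : C a + C b = 0) (hcd : C c + C d = 0) :
    a = c ∨ a = d ∨ b = c ∨ b = d := by
  by_contra! ⟨hac, had, hbc, hbd⟩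
  have cross : ∀ {j k j' k'}, j ≠ k → j' ≠ k' → C j + C k ≠ 0 → C j' + C k' ≠ 0 →
      C j + C k + (C j' + C k') = 0 → False := by
    intro j k j' k' hjk hjk' h h' h0
    have := hg _ _ hjk h
    have := hg _ _ hjk' h'
    have : g (C j + C k) + g (C j' + C k') = 0 := by rw [← map_add, h0, map_zero]
    linarith
  by_cases hac0 : C a + C c = 0
  · refine cross had hbc ?_ ?_ (by linear_combination (norm := module) hab + hcd)
    · convert add_self_ne_zero_of_ne_zero (hC a) using 1
      linear_combination (norm := module) hcd - hac0
    · convert add_self_ne_zero_of_ne_zero (hC c) using 1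
      linear_combination (norm := module) hab - hac0
  · refine cross hac hbd hac0 ?_ (by linear_combination (norm := module) hab + hcd)
    contrapose! hac0
    linear_combination (norm := module) hab + hcd - hac0

lemma exists_center_of_null_pairs [Nonempty ι] :
    ∃ ℓ, ∀ j k, C j + C k = 0 → j = ℓ ∨ k = ℓ := by
  by_contra! h
  obtain ⟨a, b, hab, -, -⟩ := h (Classical.arbitrary ι)
  obtain ⟨c, d, hcd, hca, hda⟩ := h a
  obtain ⟨e, f, hef, heb, hfb⟩ := h b
  have m1 := null_pairs_meet hC hg hab hcd
  have m2 := null_pairs_meet hC hg hab hef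
  have m3 := null_pairs_meet hC hg hcd hef
  have tri : ∀ x y z, C x + C y = 0 → C y + C z = 0 → C x + C z = 0 → False :=
    fun x y z hxy hyz hxz => add_self_ne_zero_of_ne_zero (hC x)
      (by linear_combination (norm := module) hxy - hyz + hxz)
  -- `ab`, `cd`, `ef` meet pairwise while `a ∉ cd` and `b ∉ ef`, which forces a triangle.
  grind

lemma card_le_two_mul_sum_or_exists_forall_eq_neg [Fintype ι] [DecidableEq ι]
    (hcard : 4 ≤ Fintype.card ι) :
    (Fintype.card ι : ℝ) ≤ 2 * ∑ j, g (C j) ∨ ∃ ℓ, ∀ j ≠ ℓ, C j = -C ℓ := by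
  have : Nonempty ι := Fintype.card_pos_iff.mp (by omega)
  obtain ⟨ℓ, hℓ⟩ := exists_center_of_null_pairs hC hg
  by_cases hstar : ∀ j ≠ ℓ, C j = -C ℓ
  · exact Or.inr ⟨ℓ, hstar⟩
  push Not at hstar
  obtain ⟨m, hmℓ, hm⟩ := hstar
  set T := (Finset.univ.erase ℓ).erase m
  have hm_mem : m ∈ Finset.univ.erase ℓ := Finset.mem_erase.mpr ⟨hmℓ, Finset.mem_univ m⟩
  have hT : T.card = Fintype.card ι - 2 := by
    rw [Finset.card_erase_of_mem hm_mem, Finset.card_erase_of_mem (Finset.mem_univ ℓ),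
      Finset.card_univ]
    omega
  have hrest := card_le_two_mul_sum_of_one_le_add T (fun j => g (C j)) (by omega)
    fun j hj k hk hjk => by
      rw [← map_add]
      refine hg j k hjk fun h0 => ?_
      rcases hℓ j k h0 with rfl | rfl
      · exact Finset.ne_of_mem_erase (Finset.mem_of_mem_erase hj) rfl
      · exact Finset.ne_of_mem_erase (Finset.mem_of_mem_erase hk) rfl
  have hℓm : 1 ≤ g (C ℓ) + g (C m) := by
    rw [← map_add]
    exact hg ℓ m (Ne.symm hmℓ) fun h0 => hm (eq_neg_of_add_eq_zero_right h0)
  have hsplit : ∑ j, g (C j) = g (C ℓ) + (g (C m) + ∑ j ∈ T, g (C j)) := by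
    rw [Finset.add_sum_erase _ (fun j => g (C j)) hm_mem,
      Finset.add_sum_erase _ (fun j => g (C j)) (Finset.mem_univ ℓ)]
  rw [hT, Nat.cast_sub (by omega)] at hrest
  push_cast at hrest
  left
  linarith

end NullPairs

noncomputable def corootForm (v : V) : V →ₗ[ℝ] ℝ := (2 / ⟪v, v⟫) • innerₗ V v

lemma corootForm_apply (v x : V) : corootForm v x = 2 * ⟪v, x⟫ / ⟪v, v⟫ := by
  simp [corootForm]
  ring

lemma corootForm_self {v : V} (hv : v ≠ 0) : corootForm v v = 2 := by
  rw [corootForm_apply, mul_div_assoc, div_self (inner_self_ne_zero.mpr hv), mul_one]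

namespace IsRootSet

variable {R : Set V} (hR : IsRootSet R)
include hR

lemma ne_zero {v : V} (hv : v ∈ R) : v ≠ 0 := fun h => hR.2.1 (h ▸ hv)

lemma eq_or_eq_neg_of_smul_mem {u : V} {r s : ℝ} (hs : s • u ∈ R) (hr : r • u ∈ R) :
    r = s ∨ r = -s := by
  have hs0 : s ≠ 0 := fun h => hR.ne_zero hs (by rw [h, zero_smul])
  have h := hR.2.2.1 _ hs (r / s) (by rwa [smul_smul, div_mul_cancel₀ _ hs0])
  rw [div_eq_one_iff_eq hs0, div_eq_iff hs0] at h
  rcases h with h | h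
  · exact Or.inl h
  · exact Or.inr (by linarith)

/-- The pairing is an integer, and it is positive because
`2⟪v, v - w⟫ = ‖v - w‖² + ‖v‖² - ‖w‖²`. -/
lemma one_le_corootForm_sub {v w : V} (hv : v ∈ R) (hw : w ∈ R) (hwv : ‖w‖ ≤ ‖v‖)
    (hne : w ≠ v) : 1 ≤ corootForm v (v - w) := by
  obtain ⟨n, hn⟩ := hR.2.2.2.1 v hv w hw
  have hint : corootForm v (v - w) = ((2 - n : ℤ) : ℝ) := by
    rw [map_sub, corootForm_self (hR.ne_zero hv), corootForm_apply, hn]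
    push_cast
    rfl
  have hpos : 0 < corootForm v (v - w) := by
    have hsq := norm_sub_sq_real v w
    have hd : 0 < ‖v - w‖ := norm_pos_iff.mpr (sub_ne_zero.mpr hne.symm)
    rw [corootForm_apply, inner_sub_right, real_inner_self_eq_norm_sq]
    exact div_pos (by nlinarith [norm_nonneg w]) (pow_pos (norm_pos_iff.mpr (hR.ne_zero hv)) 2)
  rw [hint] at hpos ⊢
  have : (0 : ℤ) < 2 - n := by exact_mod_cast hpos
  exact_mod_cast (by omega : (1 : ℤ) ≤ 2 - n)

end IsRootSet

lemma sum_eq_smul_of_forall_ne_eq_neg {M ι : Type*} [AddCommGroup M] [Module ℝ M] [Fintype ι]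
    [DecidableEq ι] {E : ι → M} {ℓ : ι} (hℓ : ∀ j ≠ ℓ, E j = -E ℓ) :
    ∑ j, E j = (2 - Fintype.card ι : ℝ) • E ℓ := by
  rw [← Finset.add_sum_erase _ _ (Finset.mem_univ ℓ),
    Finset.sum_congr rfl fun j hj => hℓ j (Finset.ne_of_mem_erase hj), Finset.sum_const,
    Finset.card_erase_of_mem (Finset.mem_univ ℓ), Finset.card_univ, ← Nat.cast_smul_eq_nsmul ℝ,
    Nat.cast_pred (Fintype.card_pos_iff.mpr ⟨ℓ⟩)]
  module

section LongestWeight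

variable {R P : Set V} {v : V} (hR : IsRootSet R) (hPR : P ⊆ R) (hv : v ∈ P)
  (hmax : ∀ w ∈ P, ‖w‖ ≤ ‖v‖)
include hR hPR hv hmax

lemma one_le_corootForm_of_sub_mem {z : V} (hz : z ≠ 0) (hvz : v - z ∈ P) :
    1 ≤ corootForm v z := by
  simpa using hR.one_le_corootForm_sub (hPR hv) (hPR hvz) (hmax _ hvz) (by simpa using hz)

lemma card_le_four_of_flips {ι : Type*} [Fintype ι] (C : ι → V) (x : V) (hC : ∀ j, C j ≠ 0)
    (hvx : v = x + ∑ j, C j) (hx : v - (2 : ℝ) • x ∈ P) (hflip : ∀ j, v - (2 : ℝ) • C j ∈ P) :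
    Fintype.card ι ≤ 4 := by
  have hpair : ∀ z, z ≠ 0 → v - z ∈ P → 1 ≤ corootForm v z :=
    fun _ => one_le_corootForm_of_sub_mem hR hPR hv hmax
  have hxnonneg : 0 ≤ corootForm v ((2 : ℝ) • x) := by
    rcases eq_or_ne x 0 with rfl | hx0
    · simp
    · linarith [hpair _ (smul_ne_zero two_ne_zero hx0) hx]
  have htotal : corootForm v ((2 : ℝ) • x) + ∑ j, corootForm v ((2 : ℝ) • C j) = 4 := by
    rw [← map_sum, ← map_add, ← Finset.smul_sum, ← smul_add, ← hvx, map_smul,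
      corootForm_self (hR.ne_zero (hPR hv))]
    norm_num
  have hcard : (Fintype.card ι : ℝ) ≤ ∑ j, corootForm v ((2 : ℝ) • C j) := by
    simpa using Finset.card_nsmul_le_sum Finset.univ _ 1
      fun j _ => hpair _ (smul_ne_zero two_ne_zero (hC j)) (hflip j)
  exact_mod_cast (by linarith : (Fintype.card ι : ℝ) ≤ 4)

lemma card_le_eight_of_pair_flips {ι : Type*} [Fintype ι] [DecidableEq ι] (E : ι → V) (x : V)
    (hE : ∀ j, E j ≠ 0) (hvx : v = x + ∑ j, E j) (hx : v - (2 : ℝ) • x ∈ P)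
    (hflip : ∀ j k, j ≠ k → v - (2 : ℝ) • (E j + E k) ∈ P) :
    Fintype.card ι ≤ 8 := by
  by_contra! hcard
  have hcardR : (9 : ℝ) ≤ Fintype.card ι := by exact_mod_cast hcard
  have hpair : ∀ z, z ≠ 0 → v - z ∈ P → 1 ≤ corootForm v z :=
    fun _ => one_le_corootForm_of_sub_mem hR hPR hv hmax
  set g := (2 : ℝ) • corootForm v
  have hg2 : ∀ y, g y = corootForm v ((2 : ℝ) • y) := fun y => by simp [g]
  have hgx : x = 0 ∨ 1 ≤ g x := by
    rcases eq_or_ne x 0 with rfl | hx0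
    · exact Or.inl rfl
    · exact Or.inr (hg2 x ▸ hpair _ (smul_ne_zero two_ne_zero hx0) hx)
  have htotal : g x + ∑ j, g (E j) = 4 := by
    rw [← map_sum, ← map_add, ← hvx, hg2, map_smul, corootForm_self (hR.ne_zero (hPR hv))]
    norm_num
  have hpairE : ∀ j k, j ≠ k → E j + E k ≠ 0 → 1 ≤ g (E j + E k) := fun j k hjk h0 =>
    hg2 _ ▸ hpair _ (smul_ne_zero two_ne_zero h0) (hflip j k hjk)
  rcases card_le_two_mul_sum_or_exists_forall_eq_neg hE hpairE (by omega) with hsum | ⟨ℓ, hℓ⟩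
  · rcases hgx with rfl | h
    · simp only [map_zero, zero_add] at htotal
      linarith
    · linarith
  obtain ⟨j, hj, k, hk, hjk⟩ := (Finset.one_lt_card (s := Finset.univ.erase ℓ)).mp (by
    rw [Finset.card_erase_of_mem (Finset.mem_univ ℓ), Finset.card_univ]
    omega)
  have hEjk : E j + E k = (-2 : ℝ) • E ℓ := by
    rw [hℓ j (Finset.ne_of_mem_erase hj), hℓ k (Finset.ne_of_mem_erase hk)]
    module
  have hgℓ : 1 ≤ -2 * g (E ℓ) := by
    have := hpairE j k hjk (hEjk ▸ smul_ne_zero (by norm_num) (hE ℓ))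
    rwa [hEjk, map_smul, smul_eq_mul] at this
  have hsumE := sum_eq_smul_of_forall_ne_eq_neg hℓ
  rcases hgx with rfl | hgx
  · have hv' : v = (2 - Fintype.card ι : ℝ) • E ℓ := by rw [hvx, zero_add, hsumE]
    have hw' : v - (2 : ℝ) • (E j + E k) = (6 - Fintype.card ι : ℝ) • E ℓ := by
      rw [hEjk, hv']
      module
    rcases hR.eq_or_eq_neg_of_smul_mem (hv' ▸ hPR hv) (hw' ▸ hPR (hflip j k hjk)) with h | h <;>
      linarith
  · have : ∑ j, g (E j) = (2 - Fintype.card ι) * g (E ℓ) := by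
      rw [← map_sum, hsumE, map_smul, smul_eq_mul]
    nlinarith

end LongestWeight

section SignFlips

variable {ι M : Type*} [DecidableEq ι] [AddCommGroup M] [Module ℝ M]

def flipSign (ε : ι → ℝ) (j : ι) : ι → ℝ := Function.update ε j (-ε j)

lemma flipSign_of_ne {ε : ι → ℝ} {j k : ι} (h : k ≠ j) : flipSign ε j k = ε k :=
  Function.update_of_ne h _ _

lemma flipSign_eq_one_or_eq_neg_one {ε : ι → ℝ} (hε : ∀ k, ε k = 1 ∨ ε k = -1) (j k : ι) :
    flipSign ε j k = 1 ∨ flipSign ε j k = -1 := by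
  rcases eq_or_ne k j with rfl | hk
  · rw [flipSign, Function.update_self]
    rcases hε k with h | h <;> simp [h]
  · rw [flipSign_of_ne hk]
    exact hε k

variable [Fintype ι]

lemma prod_flipSign (ε : ι → ℝ) (j : ι) : ∏ k, flipSign ε j k = -∏ k, ε k := by
  rw [flipSign, Finset.prod_update_of_mem (Finset.mem_univ j), Finset.sdiff_singleton_eq_erase,
    ← Finset.mul_prod_erase _ ε (Finset.mem_univ j)]
  ring

lemma sum_flipSign_smul (ε : ι → ℝ) (β : ι → M) (j : ι) :
    ∑ k, flipSign ε j k • β k = ∑ k, ε k • β k - (2 : ℝ) • (ε j • β j) := by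
  rw [← Finset.add_sum_erase _ _ (Finset.mem_univ j),
    ← Finset.add_sum_erase _ (fun k => ε k • β k) (Finset.mem_univ j), flipSign,
    Function.update_self,
    Finset.sum_congr rfl fun k hk => by rw [Function.update_of_ne (Finset.ne_of_mem_erase hk)]]
  module

lemma prod_flipSign_flipSign (ε : ι → ℝ) (j k : ι) :
    ∏ l, flipSign (flipSign ε j) k l = ∏ l, ε l := by
  rw [prod_flipSign, prod_flipSign, neg_neg]

lemma sum_flipSign_flipSign_smul (ε : ι → ℝ) (β : ι → M) {j k : ι} (hjk : j ≠ k) :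
    ∑ l, flipSign (flipSign ε j) k l • β l =
      ∑ l, ε l • β l - (2 : ℝ) • (ε j • β j + ε k • β k) := by
  rw [sum_flipSign_smul, sum_flipSign_smul, flipSign_of_ne hjk.symm]
  module

lemma smul_ne_zero_of_eq_one_or_eq_neg_one {a : ℝ} (ha : a = 1 ∨ a = -1) {b : M} (hb : b ≠ 0) :
    a • b ≠ 0 := by
  rcases ha with rfl | rfl <;> simpa

end SignFlips

section WeightSystems

variable {κ ι : Type*} [Fintype ι] [Nonempty κ]

theorem le_four_of_isAdmissible_typeI (α : κ → V) (β : ι → V) (hβ : ∀ j, β j ≠ 0)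
    (hα : ∀ i, ∃ i', α i' = -α i)
    (hadm : IsAdmissible {v : V | ∃ (i : κ) (ε : ι → ℝ),
      (∀ j, ε j = 1 ∨ ε j = -1) ∧ v = α i + ∑ j, ε j • β j}) :
    Fintype.card ι ≤ 4 := by
  classical
  obtain ⟨⟨-, R, ⟨hR, -⟩, hPR⟩, -⟩ := hadm
  obtain ⟨v, hv, hmax⟩ := Set.exists_max_image _ (‖·‖) (hR.1.subset hPR)
    ⟨_, Classical.arbitrary κ, 1, fun _ => Or.inl rfl, rfl⟩
  obtain ⟨i, ε, hε, rfl⟩ := id hv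
  obtain ⟨i', hi'⟩ := hα i
  refine card_le_four_of_flips hR hPR hv hmax (fun j => ε j • β j) (α i)
    (fun j => smul_ne_zero_of_eq_one_or_eq_neg_one (hε j) (hβ j)) rfl
    ⟨i', ε, hε, by rw [hi']; module⟩
    fun j => ⟨i, flipSign ε j, flipSign_eq_one_or_eq_neg_one hε j, ?_⟩
  rw [sum_flipSign_smul]
  abel

theorem le_seven_of_isAdmissible_typeII (hq : Odd (Fintype.card ι)) (α : κ → V) (β : ι → V)
    (hβ : ∀ j, β j ≠ 0)
    (hadm : IsAdmissible {v : V | ∃ (i : κ) (ε : ι → ℝ),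
      (∀ j, ε j = 1 ∨ ε j = -1) ∧ v = (∏ j, ε j) • α i + ∑ j, ε j • β j}) :
    Fintype.card ι ≤ 7 := by
  classical
  set P := {v : V | ∃ (i : κ) (ε : ι → ℝ),
      (∀ j, ε j = 1 ∨ ε j = -1) ∧ v = (∏ j, ε j) • α i + ∑ j, ε j • β j}
  obtain ⟨⟨-, R, ⟨hR, -⟩, hPR⟩, -⟩ := hadm
  obtain ⟨v, hv, hmax⟩ := Set.exists_max_image _ (‖·‖) (hR.1.subset hPR)
    ⟨_, Classical.arbitrary κ, 1, fun _ => Or.inl rfl, rfl⟩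
  obtain ⟨i, ε, hε, rfl⟩ := id hv
  set D := (∏ j, ε j) • α i
  set C := fun j => ε j • β j
  have hC : ∀ j, C j ≠ 0 := fun j => smul_ne_zero_of_eq_one_or_eq_neg_one (hε j) (hβ j)
  have hsingle : ∀ k, D + ∑ j, C j - (2 : ℝ) • (D + C k) ∈ P := fun k =>
    ⟨i, flipSign ε k, flipSign_eq_one_or_eq_neg_one hε k, by
      rw [prod_flipSign, sum_flipSign_smul, neg_smul]
      module⟩
  have hdouble : ∀ j k, j ≠ k → D + ∑ j, C j - (2 : ℝ) • (C j + C k) ∈ P := fun j k hjk =>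
    ⟨i, flipSign (flipSign ε j) k,
      flipSign_eq_one_or_eq_neg_one (flipSign_eq_one_or_eq_neg_one hε j) k, by
      rw [prod_flipSign_flipSign, sum_flipSign_flipSign_smul _ _ hjk]
      exact add_sub_assoc _ _ _⟩
  rcases eq_or_ne D 0 with hD | hD
  · have := card_le_eight_of_pair_flips hR hPR hv hmax C D hC rfl
      (by simpa only [hD, smul_zero, sub_zero] using hv) hdouble
    obtain ⟨m, hm⟩ := hq
    omega
  · have := card_le_eight_of_pair_flips hR hPR hv hmax (fun o : Option ι => o.elim D C) 0
      (by rintro (_ | j); exacts [hD, hC j]) (by rw [Fintype.sum_option, zero_add]; rfl)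
      (by rwa [smul_zero, sub_zero]) (by
        rintro (_ | j) (_ | k) hjk
        · exact absurd rfl hjk
        · exact hsingle k
        · simpa only [Option.elim_some, Option.elim_none, add_comm (C j)] using hsingle j
        · exact hdouble j k fun h => hjk (congrArg some h))
    rw [Fintype.card_option] at this
    omega

theorem le_eight_of_isAdmissible_typeIII (c : ℝ) (hc : c = 1 ∨ c = -1) (α : κ → V)
    (β : ι → V) (hβ : ∀ j, β j ≠ 0) (hα : ∀ i, ∃ i', α i' = -α i)
    (hadm : IsAdmissible {v : V | ∃ (i : κ) (ε : ι → ℝ),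
      (∀ j, ε j = 1 ∨ ε j = -1) ∧ (∏ j, ε j) = c ∧ v = α i + ∑ j, ε j • β j}) :
    Fintype.card ι ≤ 8 := by
  classical
  rcases isEmpty_or_nonempty ι with hι | hι
  · simp
  obtain ⟨⟨-, R, ⟨hR, -⟩, hPR⟩, -⟩ := hadm
  obtain ⟨v, hv, hmax⟩ := Set.exists_max_image _ (‖·‖) (hR.1.subset hPR)
    ⟨_, Classical.arbitrary κ, Pi.mulSingle (Classical.arbitrary ι) c,
      fun k => by by_cases hk : k = Classical.arbitrary ι <;> simp [hk, hc],
      by simp [Finset.prod_pi_mulSingle'], rfl⟩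
  obtain ⟨i, ε, hε, hprod, rfl⟩ := id hv
  obtain ⟨i', hi'⟩ := hα i
  refine card_le_eight_of_pair_flips hR hPR hv hmax (fun j => ε j • β j) (α i)
    (fun j => smul_ne_zero_of_eq_one_or_eq_neg_one (hε j) (hβ j)) rfl
    ⟨i', ε, hε, hprod, by rw [hi']; module⟩
    fun j k hjk => ⟨i, flipSign (flipSign ε j) k,
      flipSign_eq_one_or_eq_neg_one (flipSign_eq_one_or_eq_neg_one hε j) k,
      by rw [prod_flipSign_flipSign, hprod], ?_⟩
  rw [sum_flipSign_flipSign_smul _ _ hjk]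
  abel

end WeightSystems

/-- Combinatorial bounds on the weight systems of the isotropy representation of a
compact homogeneous space of equal rank with a rank `r` even Clifford structure: for a
nonempty admissible subsystem of roots `W` of type I (`A + {∑ εⱼβⱼ}`, `A = -A`) one has
`q ≤ 4`; of type II (`{(∏εⱼ)αᵢ + ∑ εⱼβⱼ}`, `q` odd) one has `q ≤ 7`; of types III–IV
(`A + {∑ εⱼβⱼ : ∏ εⱼ = ±1}`, `q` even) one has `q ≤ 8`. Consequently `r = 2q+1 ≤ 9` for
`r` odd, `r = 2q ≤ 14` for `r ≡ 2 (mod 4)`, `r = 2q ≤ 12` for `r ≡ 4 (mod 8)`, and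
`r = 2q ≤ 16` for `r ≡ 0 (mod 8)`. -/
theorem stmt_19 :
    -- type I
    (∀ (p q : ℕ), 0 < p → ∀ (α : Fin p → V) (β : Fin q → V), (∀ j, β j ≠ 0) →
      (∀ i, ∃ i', α i' = -α i) →
      IsAdmissible {v : V | ∃ (i : Fin p) (ε : Fin q → ℝ),
        (∀ j, ε j = 1 ∨ ε j = -1) ∧ v = α i + ∑ j, ε j • β j} →
      q ≤ 4) ∧
    -- type II
    (∀ (p q : ℕ), 0 < p → Odd q → ∀ (α : Fin p → V) (β : Fin q → V), (∀ j, β j ≠ 0) →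
      IsAdmissible {v : V | ∃ (i : Fin p) (ε : Fin q → ℝ),
        (∀ j, ε j = 1 ∨ ε j = -1) ∧ v = (∏ j, ε j) • α i + ∑ j, ε j • β j} →
      q ≤ 7) ∧
    -- types III--IV
    (∀ (c : ℝ), (c = 1 ∨ c = -1) → ∀ (p q : ℕ), 0 < p → Even q →
      ∀ (α : Fin p → V) (β : Fin q → V), (∀ j, β j ≠ 0) → (∀ i, ∃ i', α i' = -α i) →
      IsAdmissible {v : V | ∃ (i : Fin p) (ε : Fin q → ℝ),
        (∀ j, ε j = 1 ∨ ε j = -1) ∧ (∏ j, ε j) = c ∧ v = α i + ∑ j, ε j • β j} →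
      q ≤ 8) ∧
    -- consequences for the rank r
    (∀ r q : ℕ, r = 2 * q + 1 → q ≤ 4 → r ≤ 9) ∧
    (∀ r q : ℕ, r = 2 * q → r % 4 = 2 → q ≤ 7 → r ≤ 14) ∧
    (∀ r q : ℕ, r = 2 * q → r % 8 = 4 → q ≤ 8 → r ≤ 12) ∧
    (∀ r q : ℕ, r = 2 * q → r % 8 = 0 → q ≤ 8 → r ≤ 16) := by
  refine ⟨fun p q hp α β hβ hα hadm => ?_, fun p q hp hq α β hβ hadm => ?_,
    fun c hc p q hp _ α β hβ hα hadm => ?_, fun _ _ _ _ => by omega, fun _ _ _ _ _ => by omega,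
    fun _ _ _ _ _ => by omega, fun _ _ _ _ _ => by omega⟩ <;>
    have := Fin.pos_iff_nonempty.mp hp
  · simpa using le_four_of_isAdmissible_typeI α β hβ hα hadm
  · simpa using le_seven_of_isAdmissible_typeII (by simpa using hq) α β hβ hadm
  · simpa using le_eight_of_isAdmissible_typeIII c hc α β hβ hα hadm
end
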